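/- arXiv:1111.4512 — 12 statements merged into one kernel-verified Lean document; each statement's English description precedes it below -/
import Mathlib

section
/- Let S be an amiable semigroup. Then S is adequate (i.e., its idempotents commute) if and only if S avoids both F and M. Concretely: the idempotents of S commute if and only if both of the following hold: (a) there do not exist idempotents a, b ∈ S with ab ≠ ba and aba = ab (avoidance of M), and (b) there do not exist idempotents a, b ∈ S such that the elements (ab)^m, (ba)^m (for all m ≥ 1), (ab)^n a, (ba)^n b (for all n ≥ 0, with (ab)^0 a = a and (ba)^0 b = b) are pairwise distinct (avoidance of F). -/
/-- The starred Green relation `𝓛*` on a semigroup `S`: `x 𝓛* y` iff for all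
`u v ∈ S¹` (realized as `WithOne S`), `xu = xv ↔ yu = yv`. -/
def LStar {S : Type*} [Semigroup S] (x y : S) : Prop :=
  ∀ u v : WithOne S,
    ((x : WithOne S) * u = (x : WithOne S) * v ↔ (y : WithOne S) * u = (y : WithOne S) * v)

/-- The starred Green relation `𝓡*` on a semigroup `S`: `x 𝓡* y` iff for all
`u v ∈ S¹` (realized as `WithOne S`), `ux = vx ↔ uy = vy`. -/
def RStar {S : Type*} [Semigroup S] (x y : S) : Prop :=
  ∀ u v : WithOne S,
    (u * (x : WithOne S) = v * (x : WithOne S) ↔ u * (y : WithOne S) = v * (y : WithOne S))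

/-- A semigroup is amiable if each `𝓛*`-class and each `𝓡*`-class contains
exactly one idempotent. -/
def IsAmiable (S : Type*) [Semigroup S] : Prop :=
  (∀ x : S, ∃! e : S, e * e = e ∧ LStar x e) ∧
  (∀ x : S, ∃! e : S, e * e = e ∧ RStar x e)

/-- `ABm a b n = (a*b)^(n+1)`; as `n` ranges over `ℕ` this gives the powers
`(ab)^m` for all `m ≥ 1`. -/
def ABm {S : Type*} [Mul S] (a b : S) : ℕ → S
  | 0 => a * b
  | n + 1 => (a * b) * ABm a b n

/-- `ABa a b n = (a*b)^n * a`, with the convention `(a*b)^0 * a = a`. -/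
def ABa {S : Type*} [Mul S] (a b : S) : ℕ → S
  | 0 => a
  | n + 1 => (a * b) * ABa a b n

/-- The elements `(ab)^m, (ba)^m (m ≥ 1)` and `(ab)^n a, (ba)^n b (n ≥ 0)`
are pairwise distinct. -/
def PairwiseDistinctF {S : Type*} [Mul S] (a b : S) : Prop :=
  Function.Injective (ABm a b) ∧ Function.Injective (ABm b a) ∧
  Function.Injective (ABa a b) ∧ Function.Injective (ABa b a) ∧
  (∀ m n, ABm a b m ≠ ABm b a n) ∧ (∀ m n, ABm a b m ≠ ABa a b n) ∧
  (∀ m n, ABm a b m ≠ ABa b a n) ∧ (∀ m n, ABm b a m ≠ ABa a b n) ∧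
  (∀ m n, ABm b a m ≠ ABa b a n) ∧ (∀ m n, ABa a b m ≠ ABa b a n)

section AuxLemmas

variable {S : Type*} [Semigroup S]

/-! ### Multiplication lemmas for alternating products -/

lemma aux_l1 (a b : S) (ha : a * a = a) (m : ℕ) : a * ABm a b m = ABm a b m := by
  induction m with
  | zero => show a * (a * b) = a * b; rw [← mul_assoc, ha]
  | succ n ih =>
      show a * ((a * b) * ABm a b n) = (a * b) * ABm a b n
      rw [← mul_assoc, ← mul_assoc, ha]

lemma aux_l2 (a b : S) (hb : b * b = b) (m : ℕ) : ABm a b m * b = ABm a b m := by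
  induction m with
  | zero => show (a * b) * b = a * b; rw [mul_assoc, hb]
  | succ n ih =>
      show ((a * b) * ABm a b n) * b = (a * b) * ABm a b n
      rw [mul_assoc, ih]

lemma aux_l3 (a b : S) (m : ℕ) : ABa a b m * b = ABm a b m := by
  induction m with
  | zero => rfl
  | succ n ih =>
      show ((a * b) * ABa a b n) * b = (a * b) * ABm a b n
      rw [mul_assoc, ih]

lemma aux_l4 (a b : S) (ha : a * a = a) (m : ℕ) : a * ABa a b m = ABa a b m := by
  induction m with
  | zero => exact ha
  | succ n ih =>
      show a * ((a * b) * ABa a b n) = (a * b) * ABa a b n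
      rw [← mul_assoc, ← mul_assoc, ha]

lemma aux_l5 (a b : S) (m : ℕ) : ABm a b m * a = ABa a b (m + 1) := by
  induction m with
  | zero => rfl
  | succ n ih =>
      show ((a * b) * ABm a b n) * a = (a * b) * ABa a b (n + 1)
      rw [mul_assoc, ih]

lemma aux_l6 (a b : S) (m : ℕ) : b * ABa a b m = ABm b a m := by
  induction m with
  | zero => rfl
  | succ n ih =>
      show b * ((a * b) * ABa a b n) = (b * a) * ABm b a n
      rw [← mul_assoc, ← mul_assoc, mul_assoc, ih]

lemma aux_l7 (a b : S) (m : ℕ) : b * ABm a b m = ABa b a (m + 1) := by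
  induction m with
  | zero =>
      show b * (a * b) = (b * a) * b
      rw [mul_assoc]
  | succ n ih =>
      show b * ((a * b) * ABm a b n) = (b * a) * ABa b a (n + 1)
      rw [← mul_assoc, ← mul_assoc, mul_assoc, ih]

lemma aux_l9 (a b : S) (i j : ℕ) :
    ABm a b i * ABm a b j = ABm a b (i + j + 1) := by
  induction i with
  | zero =>
      have h0 : 0 + j + 1 = j + 1 := by omega
      rw [h0]; rfl
  | succ n ih =>
      have h0 : n + 1 + j + 1 = (n + j + 1) + 1 := by omega
      rw [h0]
      show ((a * b) * ABm a b n) * ABm a b j = (a * b) * ABm a b (n + j + 1)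
      rw [mul_assoc, ih]

lemma aux_l10 (a b : S) (ha : a * a = a) (i j : ℕ) :
    ABa a b i * ABa a b j = ABa a b (i + j) := by
  induction i with
  | zero =>
      have h0 : 0 + j = j := by omega
      rw [h0]; exact aux_l4 a b ha j
  | succ n ih =>
      have h0 : n + 1 + j = (n + j) + 1 := by omega
      rw [h0]
      show ((a * b) * ABa a b n) * ABa a b j = (a * b) * ABa a b (n + j)
      rw [mul_assoc, ih]

lemma aux_l11 (a b : S) (ha : a * a = a) (m : ℕ) : ABa a b m * a = ABa a b m := by
  induction m with
  | zero => exact ha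
  | succ n ih =>
      show ((a * b) * ABa a b n) * a = (a * b) * ABa a b n
      rw [mul_assoc, ih]

/-! ### Peeling lemmas: a left absorber absorbs every alternating product -/

lemma aux_pd1 (a b d : S) (hda : d * a = d) (hdb : d * b = d) (m : ℕ) :
    d * ABm a b m = d := by
  have hd2 : d * (a * b) = d := by rw [← mul_assoc, hda, hdb]
  induction m with
  | zero => exact hd2
  | succ n ih =>
      show d * ((a * b) * ABm a b n) = d
      rw [← mul_assoc, hd2, ih]

lemma aux_pd2 (a b d : S) (hda : d * a = d) (hdb : d * b = d) (m : ℕ) :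
    d * ABa a b m = d := by
  have hd2 : d * (a * b) = d := by rw [← mul_assoc, hda, hdb]
  induction m with
  | zero => exact hda
  | succ n ih =>
      show d * ((a * b) * ABa a b n) = d
      rw [← mul_assoc, hd2, ih]

lemma aux_pg1 (a b g d : S) (hga : g * a = g) (hgb : g * b = d)
    (hda : d * a = d) (hdb : d * b = d) (m : ℕ) : g * ABm a b m = d := by
  have hg2 : g * (a * b) = d := by rw [← mul_assoc, hga, hgb]
  cases m with
  | zero => exact hg2
  | succ n =>
      show g * ((a * b) * ABm a b n) = d
      rw [← mul_assoc, hg2, aux_pd1 a b d hda hdb n]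

lemma aux_pg2 (a b g d : S) (hga : g * a = g) (hgb : g * b = d)
    (hda : d * a = d) (hdb : d * b = d) (m : ℕ) : g * ABa a b (m + 1) = d := by
  have hg2 : g * (a * b) = d := by rw [← mul_assoc, hga, hgb]
  show g * ((a * b) * ABa a b m) = d
  rw [← mul_assoc, hg2, aux_pd2 a b d hda hdb m]

/-! ### Amiability utilities -/

lemma aux_rstar_of (x y : S) (h1 : x * y = y) (h2 : y * x = x) : RStar x y := by
  intro u v
  constructor
  · intro h
    have h' : u * (x : WithOne S) * (y : WithOne S)
        = v * (x : WithOne S) * (y : WithOne S) := by rw [h]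
    rwa [mul_assoc, mul_assoc, ← WithOne.coe_mul, h1] at h'
  · intro h
    have h' : u * (y : WithOne S) * (x : WithOne S)
        = v * (y : WithOne S) * (x : WithOne S) := by rw [h]
    rwa [mul_assoc, mul_assoc, ← WithOne.coe_mul, h2] at h'

lemma aux_lstar_of (x y : S) (h1 : y * x = y) (h2 : x * y = x) : LStar x y := by
  intro u v
  constructor
  · intro h
    have h' : (y : WithOne S) * ((x : WithOne S) * u)
        = (y : WithOne S) * ((x : WithOne S) * v) := by rw [h]
    rwa [← mul_assoc, ← mul_assoc, ← WithOne.coe_mul, h1] at h'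
  · intro h
    have h' : (x : WithOne S) * ((y : WithOne S) * u)
        = (x : WithOne S) * ((y : WithOne S) * v) := by rw [h]
    rwa [← mul_assoc, ← mul_assoc, ← WithOne.coe_mul, h2] at h'

/-- In an amiable semigroup, `R`-related idempotents are equal. -/
lemma aux_requniq (hS : IsAmiable S) (x y : S) (hx : x * x = x) (hy : y * y = y)
    (h1 : x * y = y) (h2 : y * x = x) : y = x := by
  obtain ⟨g, -, hg⟩ := hS.2 x
  have e1 := hg x ⟨hx, fun u v => Iff.rfl⟩
  have e2 := hg y ⟨hy, aux_rstar_of x y h1 h2⟩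
  exact e2.trans e1.symm

/-- In an amiable semigroup, `L`-related idempotents are equal. -/
lemma aux_lequniq (hS : IsAmiable S) (x y : S) (hx : x * x = x) (hy : y * y = y)
    (h1 : y * x = y) (h2 : x * y = x) : y = x := by
  obtain ⟨g, -, hg⟩ := hS.1 x
  have e1 := hg x ⟨hx, fun u v => Iff.rfl⟩
  have e2 := hg y ⟨hy, aux_lstar_of x y h1 h2⟩
  exact e2.trans e1.symm

/-- Lemma A: in an amiable semigroup, if `u`, `v` and `uv` are idempotent, then
`uvu = uv`. -/
lemma aux_lemA (hS : IsAmiable S) (u v : S) (hu : u * u = u)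
    (hw : (u * v) * (u * v) = u * v) : (u * v) * u = u * v := by
  have huw : u * (u * v) = u * v := by rw [← mul_assoc, hu]
  have hh : ((u * v) * u) * ((u * v) * u) = (u * v) * u := by
    have e1 : ((u * v) * u) * ((u * v) * u) = (u * v) * ((u * (u * v)) * u) := by
      simp only [mul_assoc]
    rw [e1, huw, ← mul_assoc, hw]
  have h1 : (u * v) * ((u * v) * u) = (u * v) * u := by
    rw [← mul_assoc, hw]
  have h2 : ((u * v) * u) * (u * v) = u * v := by
    have e1 : ((u * v) * u) * (u * v) = (u * v) * (u * (u * v)) := by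
      simp only [mul_assoc]
    rw [e1, huw, hw]
  exact aux_requniq hS (u * v) ((u * v) * u) hw hh h1 h2

/-- If `S` is amiable and avoids `M`, then products of idempotents that are
idempotent commute. -/
lemma aux_comm_of (hS : IsAmiable S)
    (hM : ¬ ∃ a b : S, a * a = a ∧ b * b = b ∧ a * b ≠ b * a ∧ a * b * a = a * b)
    (u v : S) (hu : u * u = u) (hv : v * v = v)
    (hw : (u * v) * (u * v) = u * v) : u * v = v * u := by
  by_contra hne
  exact hM ⟨u, v, hu, hv, hne, aux_lemA hS u v hu hw⟩

/-- The core descent lemma. -/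
lemma aux_core (hS : IsAmiable S)
    (hM : ¬ ∃ a b : S, a * a = a ∧ b * b = b ∧ a * b ≠ b * a ∧ a * b * a = a * b)
    (a b e x : S) (hb : b * b = b) (he : e * e = e)
    (hax : a * x = x) (hbx : b * x = e) (hex : e * x = e) (hxx : x * x = e)
    (hpeel : ∀ g d : S, g * a = g → g * b = d → d * a = d → d * b = d →
      g * x = d) :
    x = e := by
  obtain ⟨g, ⟨hgg, hgR⟩, -⟩ := hS.2 x
  have hgx : g * x = x := by
    have h0 : (g : WithOne S) * g = 1 * g := by
      rw [one_mul, ← WithOne.coe_mul, hgg]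
    have h1 := (hgR (g : WithOne S) 1).mpr h0
    rw [one_mul, ← WithOne.coe_mul] at h1
    exact WithOne.coe_inj.mp h1
  have hag : a * g = g := by
    have h0 : (a : WithOne S) * x = 1 * x := by
      rw [one_mul, ← WithOne.coe_mul, hax]
    have h1 := (hgR (a : WithOne S) 1).mp h0
    rw [one_mul, ← WithOne.coe_mul] at h1
    exact WithOne.coe_inj.mp h1
  have hga : g * a = g := by
    have hpp : (g * a) * (g * a) = g * a := by
      calc (g * a) * (g * a) = g * ((a * g) * a) := by simp only [mul_assoc]
        _ = g * (g * a) := by rw [hag]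
        _ = (g * g) * a := by rw [mul_assoc]
        _ = g * a := by rw [hgg]
    have h1 : g * (g * a) = g * a := by rw [← mul_assoc, hgg]
    have h2 : (g * a) * g = g := by rw [mul_assoc, hag, hgg]
    exact aux_requniq hS g (g * a) hgg hpp h1 h2
  have hbg : b * g = e * g := by
    have h0 : (b : WithOne S) * x = (e : WithOne S) * x := by
      rw [← WithOne.coe_mul, ← WithOne.coe_mul, hbx, hex]
    have h1 := (hgR (b : WithOne S) (e : WithOne S)).mp h0
    rw [← WithOne.coe_mul, ← WithOne.coe_mul] at h1
    exact WithOne.coe_inj.mp h1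
  have hxg : x * g = e * g := by
    have h0 : (x : WithOne S) * x = (e : WithOne S) * x := by
      rw [← WithOne.coe_mul, ← WithOne.coe_mul, hxx, hex]
    have h1 := (hgR (x : WithOne S) (e : WithOne S)).mp h0
    rw [← WithOne.coe_mul, ← WithOne.coe_mul] at h1
    exact WithOne.coe_inj.mp h1
  have hdd : (e * g) * (e * g) = e * g := by
    calc (e * g) * (e * g) = (e * g) * (x * g) := by rw [hxg]
      _ = e * ((g * x) * g) := by simp only [mul_assoc]
      _ = e * (x * g) := by rw [hgx]
      _ = (e * x) * g := by rw [mul_assoc]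
      _ = e * g := by rw [hex]
  have hgb : g * b = e * g := by
    have hcomm : b * g = g * b := by
      refine aux_comm_of hS hM b g hb hgg ?_
      rw [hbg]; exact hdd
    rw [← hcomm, hbg]
  have hda : (e * g) * a = e * g := by rw [mul_assoc, hga]
  have hdb : (e * g) * b = e * g := by
    rw [mul_assoc, hgb, ← mul_assoc, he]
  have hgd := hpeel g (e * g) hga hgb hda hdb
  have hx_d : x = e * g := by rw [← hgx, hgd]
  have hxxx : x * x = x := by rw [hx_d]; exact hdd
  rw [← hxx, hxxx]

/-- The family of statements "every alternating word of length `≥ n` equals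
`e`". -/
def Zc {S : Type*} [Mul S] (a b e : S) (n : ℕ) : Prop :=
  (∀ m, n ≤ 2 * m + 2 → ABm a b m = e ∧ ABm b a m = e) ∧
  (∀ m, n ≤ 2 * m + 1 → ABa a b m = e ∧ ABa b a m = e)

/-- Main auxiliary lemma: if some power of `ab` is an idempotent absorbing
`a` and `b` on both sides, then `ab = ba`. -/
lemma aux_main (hS : IsAmiable S)
    (hM : ¬ ∃ a b : S, a * a = a ∧ b * b = b ∧ a * b ≠ b * a ∧ a * b * a = a * b)
    (a b e : S) (ha : a * a = a) (hb : b * b = b) (he : e * e = e)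
    (hea : e * a = e) (hae : a * e = e) (heb : e * b = e) (hbe : b * e = e)
    (M : ℕ) (hMe : ∀ m, M ≤ m → ABm a b m = e) : a * b = b * a := by
  -- the other three families are eventually `e`
  have hPe : ∀ m, M + 1 ≤ m → ABa a b m = e := by
    intro m hm
    obtain ⟨k, rfl⟩ : ∃ k, m = k + 1 := ⟨m - 1, by omega⟩
    rw [← aux_l5 a b k, hMe k (by omega), hea]
  have hBe : ∀ m, M + 1 ≤ m → ABm b a m = e := by
    intro m hm
    rw [← aux_l6 a b m, hPe m hm, hbe]
  have hQe : ∀ m, M + 1 ≤ m → ABa b a m = e := by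
    intro m hm
    obtain ⟨k, rfl⟩ : ∃ k, m = k + 1 := ⟨m - 1, by omega⟩
    rw [← aux_l7 a b k, hMe k (by omega), hbe]
  have base : Zc a b e (2 * M + 4) := by
    constructor
    · intro m hm
      exact ⟨hMe m (by omega), hBe m (by omega)⟩
    · intro m hm
      exact ⟨hPe m (by omega), hQe m (by omega)⟩
  -- descent step
  have key : ∀ n, Zc a b e (n + 3) → Zc a b e (n + 2) := by
    intro n hZ
    obtain ⟨hZ1, hZ2⟩ := hZ
    constructor
    · intro m hm
      by_cases hc : n + 3 ≤ 2 * m + 2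
      · exact hZ1 m hc
      · have hm2 : 2 * m + 2 = n + 2 := by omega
        constructor
        · refine aux_core hS hM a b e (ABm a b m) hb he (aux_l1 a b ha m) ?_ ?_ ?_ ?_
          · rw [aux_l7 a b m]
            exact (hZ2 (m + 1) (by omega)).2
          · exact aux_pd1 a b e hea heb m
          · rw [aux_l9 a b m m]
            exact (hZ1 (m + m + 1) (by omega)).1
          · intro g d hga hgb hda hdb
            exact aux_pg1 a b g d hga hgb hda hdb m
        · refine aux_core hS hM b a e (ABm b a m) ha he (aux_l1 b a hb m) ?_ ?_ ?_ ?_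
          · rw [aux_l7 b a m]
            exact (hZ2 (m + 1) (by omega)).1
          · exact aux_pd1 b a e heb hea m
          · rw [aux_l9 b a m m]
            exact (hZ1 (m + m + 1) (by omega)).2
          · intro g d hga hgb hda hdb
            exact aux_pg1 b a g d hga hgb hda hdb m
    · intro m hm
      by_cases hc : n + 3 ≤ 2 * m + 1
      · exact hZ2 m hc
      · have hm2 : 2 * m + 1 = n + 2 := by omega
        obtain ⟨k, rfl⟩ : ∃ k, m = k + 1 := ⟨m - 1, by omega⟩
        constructor
        · refine aux_core hS hM a b e (ABa a b (k + 1)) hb he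
            (aux_l4 a b ha (k + 1)) ?_ ?_ ?_ ?_
          · rw [aux_l6 a b (k + 1)]
            exact (hZ1 (k + 1) (by omega)).2
          · exact aux_pd2 a b e hea heb (k + 1)
          · rw [aux_l10 a b ha (k + 1) (k + 1)]
            exact (hZ2 ((k + 1) + (k + 1)) (by omega)).1
          · intro g d hga hgb hda hdb
            exact aux_pg2 a b g d hga hgb hda hdb k
        · refine aux_core hS hM b a e (ABa b a (k + 1)) ha he
            (aux_l4 b a hb (k + 1)) ?_ ?_ ?_ ?_
          · rw [aux_l6 b a (k + 1)]
            exact (hZ1 (k + 1) (by omega)).1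
          · exact aux_pd2 b a e heb hea (k + 1)
          · rw [aux_l10 b a hb (k + 1) (k + 1)]
            exact (hZ2 ((k + 1) + (k + 1)) (by omega)).2
          · intro g d hga hgb hda hdb
            exact aux_pg2 b a g d hga hgb hda hdb k
  -- descend to `Zc 2`
  have desc : ∀ j, Zc a b e (j + 2) → Zc a b e 2 := by
    intro j
    induction j with
    | zero => exact id
    | succ k ih => exact fun h => ih (key k h)
  have base' : Zc a b e ((2 * M + 2) + 2) := by
    have h0 : (2 * M + 2) + 2 = 2 * M + 4 := by omega
    rw [h0]; exact base
  have hZ2 : Zc a b e 2 := desc (2 * M + 2) base'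
  have h1 := (hZ2.1 0 (by omega)).1
  have h2 := (hZ2.1 0 (by omega)).2
  exact h1.trans h2.symm

/-- Any failure of pairwise distinctness yields a collision among the powers
`(ab)^m`. -/
lemma aux_reduce (a b : S) (ha : a * a = a) (hb : b * b = b)
    (h : ¬ PairwiseDistinctF a b) :
    ∃ p q, p < q ∧ ABm a b p = ABm a b q := by
  have hA : ∀ i j, i ≠ j → ABm a b i = ABm a b j →
      ∃ p q, p < q ∧ ABm a b p = ABm a b q := by
    intro i j hij hEq
    rcases lt_or_gt_of_ne hij with h' | h'
    · exact ⟨i, j, h', hEq⟩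
    · exact ⟨j, i, h', hEq.symm⟩
  have hP : ∀ i j, i ≠ j → ABa a b i = ABa a b j →
      ∃ p q, p < q ∧ ABm a b p = ABm a b q := by
    intro i j hij hEq
    have h1 : ABa a b i * b = ABa a b j * b := congrArg (· * b) hEq
    rw [aux_l3 a b i, aux_l3 a b j] at h1
    exact hA i j hij h1
  have hB : ∀ i j, i ≠ j → ABm b a i = ABm b a j →
      ∃ p q, p < q ∧ ABm a b p = ABm a b q := by
    intro i j hij hEq
    have h1 : a * ABm b a i = a * ABm b a j := congrArg (a * ·) hEq
    rw [aux_l7 b a i, aux_l7 b a j] at h1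
    exact hP (i + 1) (j + 1) (by omega) h1
  have hQ : ∀ i j, i ≠ j → ABa b a i = ABa b a j →
      ∃ p q, p < q ∧ ABm a b p = ABm a b q := by
    intro i j hij hEq
    have h1 : ABa b a i * a = ABa b a j * a := congrArg (· * a) hEq
    rw [aux_l3 b a i, aux_l3 b a j] at h1
    exact hB i j hij h1
  have hAP : ∀ i j, ABm a b i = ABa a b j →
      ∃ p q, p < q ∧ ABm a b p = ABm a b q := by
    intro i j hEq
    have h1 : ABm a b i * b = ABa a b j * b := congrArg (· * b) hEq
    rw [aux_l2 a b hb i, aux_l3 a b j] at h1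
    by_cases hij : i = j
    · subst hij
      have h2 : ABm a b i * a = ABa a b i * a := congrArg (· * a) hEq
      rw [aux_l5 a b i, aux_l11 a b ha i] at h2
      exact hP (i + 1) i (by omega) h2
    · exact hA i j hij h1
  have hAB : ∀ i j, ABm a b i = ABm b a j →
      ∃ p q, p < q ∧ ABm a b p = ABm a b q := by
    intro i j hEq
    have h1 : a * ABm a b i = a * ABm b a j := congrArg (a * ·) hEq
    rw [aux_l1 a b ha i, aux_l7 b a j] at h1
    exact hAP i (j + 1) h1
  have hAQ : ∀ i j, ABm a b i = ABa b a j →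
      ∃ p q, p < q ∧ ABm a b p = ABm a b q := by
    intro i j hEq
    have h1 : a * ABm a b i = a * ABa b a j := congrArg (a * ·) hEq
    rw [aux_l1 a b ha i, aux_l6 b a j] at h1
    by_cases hij : i = j
    · subst hij
      have h2 : b * ABm a b i = b * ABa b a i := congrArg (b * ·) hEq
      rw [aux_l7 a b i, aux_l4 b a hb i] at h2
      exact hQ (i + 1) i (by omega) h2
    · exact hA i j hij h1
  have hBP : ∀ i j, ABm b a i = ABa a b j →
      ∃ p q, p < q ∧ ABm a b p = ABm a b q := by
    intro i j hEq
    have h1 : b * ABm b a i = b * ABa a b j := congrArg (b * ·) hEq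
    rw [aux_l1 b a hb i, aux_l6 a b j] at h1
    by_cases hij : i = j
    · subst hij
      have h2 : a * ABm b a i = a * ABa a b i := congrArg (a * ·) hEq
      rw [aux_l7 b a i, aux_l4 a b ha i] at h2
      exact hP (i + 1) i (by omega) h2
    · exact hB i j hij h1
  have hBQ : ∀ i j, ABm b a i = ABa b a j →
      ∃ p q, p < q ∧ ABm a b p = ABm a b q := by
    intro i j hEq
    have h1 : ABm b a i * a = ABa b a j * a := congrArg (· * a) hEq
    rw [aux_l2 b a ha i, aux_l3 b a j] at h1
    by_cases hij : i = j
    · subst hij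
      have h2 : ABm b a i * b = ABa b a i * b := congrArg (· * b) hEq
      rw [aux_l5 b a i, aux_l11 b a hb i] at h2
      exact hQ (i + 1) i (by omega) h2
    · exact hB i j hij h1
  have hPQ : ∀ i j, ABa a b i = ABa b a j →
      ∃ p q, p < q ∧ ABm a b p = ABm a b q := by
    intro i j hEq
    have h1 : a * ABa a b i = a * ABa b a j := congrArg (a * ·) hEq
    rw [aux_l4 a b ha i, aux_l6 b a j] at h1
    exact hAP j i h1.symm
  by_contra hcon
  apply h
  refine ⟨?_, ?_, ?_, ?_, ?_, ?_, ?_, ?_, ?_, ?_⟩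
  · intro i j hEq
    by_contra hne
    exact hcon (hA i j hne hEq)
  · intro i j hEq
    by_contra hne
    exact hcon (hB i j hne hEq)
  · intro i j hEq
    by_contra hne
    exact hcon (hP i j hne hEq)
  · intro i j hEq
    by_contra hne
    exact hcon (hQ i j hne hEq)
  · intro i j hEq
    exact hcon (hAB i j hEq)
  · intro i j hEq
    exact hcon (hAP i j hEq)
  · intro i j hEq
    exact hcon (hAQ i j hEq)
  · intro i j hEq
    exact hcon (hBP i j hEq)
  · intro i j hEq
    exact hcon (hBQ i j hEq)
  · intro i j hEq
    exact hcon (hPQ i j hEq)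

end AuxLemmas

/-- **Main Theorem.** An amiable semigroup is adequate (its idempotents commute)
iff it avoids both `M` (no idempotents `a, b` with `ab ≠ ba` and `aba = ab`) and
`F` (no idempotents `a, b` whose alternating products are pairwise distinct). -/
theorem amiable_adequate_iff_avoids_F_and_M {S : Type*} [Semigroup S] (hS : IsAmiable S) :
    (∀ a b : S, a * a = a → b * b = b → a * b = b * a) ↔
      ((¬ ∃ a b : S, a * a = a ∧ b * b = b ∧ a * b ≠ b * a ∧ a * b * a = a * b) ∧
       (¬ ∃ a b : S, a * a = a ∧ b * b = b ∧ PairwiseDistinctF a b)) := by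
  constructor
  · intro hcomm
    constructor
    · rintro ⟨a, b, ha, hb, hne, -⟩
      exact hne (hcomm a b ha hb)
    · rintro ⟨a, b, ha, hb, hpd⟩
      have hc : a * b = b * a := hcomm a b ha hb
      have hidem : ABm a b 1 = ABm a b 0 := by
        show (a * b) * (a * b) = a * b
        calc (a * b) * (a * b) = a * ((b * a) * b) := by simp only [mul_assoc]
          _ = a * ((a * b) * b) := by rw [← hc]
          _ = a * (a * (b * b)) := by rw [mul_assoc]
          _ = a * (a * b) := by rw [hb]
          _ = (a * a) * b := by rw [← mul_assoc]
          _ = a * b := by rw [ha]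
      simp only [PairwiseDistinctF] at hpd
      exact absurd (hpd.1 hidem) (by omega)
  · rintro ⟨hM, hF⟩ a b ha hb
    have hPD : ¬ PairwiseDistinctF a b := fun hpd => hF ⟨a, b, ha, hb, hpd⟩
    obtain ⟨p, q, hpq, hEq⟩ := aux_reduce a b ha hb hPD
    -- periodicity of the powers of `ab`
    set t := q - p with ht
    have ht1 : 1 ≤ t := by omega
    have per : ∀ m, p ≤ m → ABm a b (m + t) = ABm a b m := by
      intro m hm
      obtain ⟨s, rfl⟩ := Nat.exists_eq_add_of_le hm
      cases s with
      | zero =>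
          have h0 : p + 0 + t = q := by omega
          have h1 : p + 0 = p := by omega
          rw [h0, h1]
          exact hEq.symm
      | succ k =>
          have h0 : p + (k + 1) + t = q + k + 1 := by omega
          have h1 : p + (k + 1) = p + k + 1 := by omega
          rw [h0, h1, ← aux_l9 a b q k, ← aux_l9 a b p k, hEq]
    have perj : ∀ j m, p ≤ m → ABm a b (m + j * t) = ABm a b m := by
      intro j
      induction j with
      | zero => intro m hm; simp
      | succ k ih =>
          intro m hm
          have h0 : m + (k + 1) * t = (m + t) + k * t := by ring
          rw [h0, ih (m + t) (by omega), per m hm]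
    -- an idempotent power
    set M := (p + 1) * t - 1 with hMdef
    have hM1 : M + 1 = (p + 1) * t := by
      have : 1 ≤ (p + 1) * t := by
        calc 1 = 1 * 1 := by omega
        _ ≤ (p + 1) * t := Nat.mul_le_mul (by omega) ht1
      omega
    have hMp : p ≤ M := by
      have : p + 1 ≤ (p + 1) * t := Nat.le_mul_of_pos_right _ (by omega)
      omega
    set e := ABm a b M with hedef
    have he : e * e = e := by
      rw [hedef, aux_l9 a b M M]
      have h0 : M + M + 1 = M + (p + 1) * t := by omega
      rw [h0]
      exact perj (p + 1) M hMp
    have hae : a * e = e := by rw [hedef]; exact aux_l1 a b ha M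
    have heb : e * b = e := by rw [hedef]; exact aux_l2 a b hb M
    have hea : e * a = e := by
      have hpp : (e * a) * (e * a) = e * a := by
        calc (e * a) * (e * a) = e * ((a * e) * a) := by simp only [mul_assoc]
          _ = e * (e * a) := by rw [hae]
          _ = (e * e) * a := by rw [mul_assoc]
          _ = e * a := by rw [he]
      have h1 : e * (e * a) = e * a := by rw [← mul_assoc, he]
      have h2 : (e * a) * e = e := by rw [mul_assoc, hae, he]
      exact aux_requniq hS e (e * a) he hpp h1 h2
    have hbe : b * e = e := by
      have hpp : (b * e) * (b * e) = b * e := by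
        calc (b * e) * (b * e) = b * ((e * b) * e) := by simp only [mul_assoc]
          _ = b * (e * e) := by rw [heb]
          _ = b * e := by rw [he]
      have h1 : (b * e) * e = b * e := by rw [mul_assoc, he]
      have h2 : e * (b * e) = e := by rw [← mul_assoc, heb, he]
      exact aux_lequniq hS e (b * e) he hpp h1 h2
    have hMe : ∀ m, M ≤ m → ABm a b m = e := by
      have haux : ∀ s, ABm a b (M + s) = e := by
        intro s
        induction s with
        | zero => exact hedef.symm
        | succ k ih =>
            have h0 : M + (k + 1) = (M + k) + 1 := by omega
            rw [h0]
            show (a * b) * ABm a b (M + k) = e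
            rw [ih, mul_assoc, hbe, hae]
      intro m hm
      obtain ⟨s, rfl⟩ := Nat.exists_eq_add_of_le hm
      exact haux s
    exact aux_main hS hM a b e ha hb he hea hae heb hbe M hMe
end

section
/- Every finite amiable semigroup which is not adequate contains an isomorphic copy of M. Concretely: if S is a finite amiable semigroup possessing two idempotents e, f with ef ≠ fe, then there exist idempotents a, b ∈ S with ab ≠ ba and aba = bab = ab (so that a, b, ab, ba form a subsemigroup of S isomorphic to M). -/
namespace AmiableAux

variable {S : Type*} [Semigroup S]

theorem rstar_refl (x : S) : RStar x x := fun _ _ => Iff.rfl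
theorem rstar_symm {x y : S} (h : RStar x y) : RStar y x := fun u v => (h u v).symm
theorem rstar_trans {x y z : S} (h1 : RStar x y) (h2 : RStar y z) : RStar x z :=
  fun u v => (h1 u v).trans (h2 u v)
theorem lstar_refl (x : S) : LStar x x := fun _ _ => Iff.rfl
theorem lstar_symm {x y : S} (h : LStar x y) : LStar y x := fun u v => (h u v).symm
theorem lstar_trans {x y z : S} (h1 : LStar x y) (h2 : LStar y z) : LStar x z :=
  fun u v => (h1 u v).trans (h2 u v)

theorem rstar_mul_left {x y : S} (z : S) (h : RStar x y) : RStar (z * x) (z * y) := by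
  intro u v
  have h' := h (u * (z : WithOne S)) (v * (z : WithOne S))
  simpa [WithOne.coe_mul, mul_assoc] using h'

theorem lstar_mul_right {x y : S} (z : S) (h : LStar x y) : LStar (x * z) (y * z) := by
  intro u v
  have h' := h ((z : WithOne S) * u) ((z : WithOne S) * v)
  simpa [WithOne.coe_mul, mul_assoc] using h'

theorem rstar_mul_eq {x y u : S} (h : RStar x y) (hu : u * x = x) : u * y = y := by
  have h1 : (u : WithOne S) * (x : WithOne S) = 1 * (x : WithOne S) := by
    rw [one_mul, ← WithOne.coe_mul, hu]
  have h2 := (h (u : WithOne S) 1).mp h1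
  rw [one_mul, ← WithOne.coe_mul] at h2
  exact WithOne.coe_inj.mp h2

theorem lstar_mul_eq {x y u : S} (h : LStar x y) (hu : x * u = x) : y * u = y := by
  have h1 : (x : WithOne S) * (u : WithOne S) = (x : WithOne S) * 1 := by
    rw [mul_one, ← WithOne.coe_mul, hu]
  have h2 := (h (u : WithOne S) 1).mp h1
  rw [mul_one, ← WithOne.coe_mul] at h2
  exact WithOne.coe_inj.mp h2

theorem swap_left (hS : IsAmiable S) {e h : S} (_ : e * e = e) (hh : h * h = h)
    (k : e * h = h) : h * e = h := by
  have idm : (h * e) * (h * e) = h * e := by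
    rw [mul_assoc, ← mul_assoc e h e, k, ← mul_assoc, hh]
  have hr : RStar h (h * e) := by
    intro u v
    constructor
    · intro huv
      rw [WithOne.coe_mul, ← mul_assoc, ← mul_assoc, huv]
    · intro huv
      have key : ((h * e : S) : WithOne S) * (h : WithOne S) = (h : WithOne S) := by
        rw [← WithOne.coe_mul, mul_assoc, k, hh]
      have h4 := congrArg (fun w => w * (h : WithOne S)) huv
      rw [mul_assoc, mul_assoc, key] at h4
      exact h4
  obtain ⟨w, -, hw⟩ := hS.2 h
  have e1 : h = w := hw h ⟨hh, rstar_refl h⟩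
  have e2 : h * e = w := hw (h * e) ⟨idm, hr⟩
  exact e2.trans e1.symm

theorem swap_right (hS : IsAmiable S) {e h : S} (_ : e * e = e) (hh : h * h = h)
    (k : h * e = h) : e * h = h := by
  have idm : (e * h) * (e * h) = e * h := by
    rw [mul_assoc, ← mul_assoc h e h, k, hh]
  have hl : LStar h (e * h) := by
    intro u v
    constructor
    · intro huv
      rw [WithOne.coe_mul, mul_assoc, mul_assoc, huv]
    · intro huv
      have key : (h : WithOne S) * ((e * h : S) : WithOne S) = (h : WithOne S) := by
        rw [← WithOne.coe_mul, ← mul_assoc, k, hh]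
      have h4 := congrArg (fun w => (h : WithOne S) * w) huv
      rw [← mul_assoc, ← mul_assoc, key] at h4
      exact h4
  obtain ⟨w, -, hw⟩ := hS.1 h
  have e1 : h = w := hw h ⟨hh, lstar_refl h⟩
  have e2 : e * h = w := hw (e * h) ⟨idm, hl⟩
  exact e2.trans e1.symm

/-- `pw s n = s^(n+1)`. -/
def pw (s : S) : ℕ → S
  | 0 => s
  | n+1 => pw s n * s

theorem pw_succ (s : S) (n : ℕ) : pw s (n+1) = pw s n * s := rfl

theorem pw_comm (s : S) (n : ℕ) : pw s n * s = s * pw s n := by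
  induction n with
  | zero => rfl
  | succ n ih => rw [pw_succ, ih, mul_assoc, ← ih]

theorem pw_add (s : S) (m n : ℕ) : pw s m * pw s n = pw s (m + n + 1) := by
  induction n with
  | zero => rfl
  | succ n ih => rw [pw_succ, ← mul_assoc, ih]; rfl

theorem exists_idem_pw_aux (s : S) (i d : ℕ) (hd : 0 < d) (heq : pw s i = pw s (i + d)) :
    ∃ n, pw s n * pw s n = pw s n := by
  have step : ∀ t, pw s (i + t) = pw s (i + t + d) := by
    intro t; induction t with
    | zero => simpa using heq
    | succ t ih =>
      have h1 : i + (t+1) = (i + t) + 1 := by omega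
      have h2 : i + t + 1 + d = (i + t + d) + 1 := by omega
      rw [h1, h2, pw_succ, pw_succ, ih]
  have multi : ∀ k t, pw s (i + t) = pw s (i + t + k * d) := by
    intro k; induction k with
    | zero => intro t; simp
    | succ k ih =>
      intro t
      have hstep := step (t + k * d)
      have harr : i + (t + k*d) = i + t + k*d := by omega
      have harr2 : i + t + k*d + d = i + t + (k+1)*d := by ring
      rw [harr, harr2] at hstep
      exact (ih t).trans hstep
  have hA : 0 < (i+1) * d := Nat.mul_pos (Nat.succ_pos i) hd
  refine ⟨(i+1) * d - 1, ?_⟩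
  set n := (i+1) * d - 1 with hn
  have hni : i ≤ n := by
    have h1 : i + 1 ≤ (i+1) * d := Nat.le_mul_of_pos_right _ hd
    omega
  have h6 : i + (n - i) = n := by omega
  have hidx : n + n + 1 = i + (n - i) + (i+1) * d := by omega
  calc pw s n * pw s n = pw s (n + n + 1) := pw_add s n n
    _ = pw s (i + (n - i) + (i+1) * d) := by rw [hidx]
    _ = pw s (i + (n - i)) := (multi (i+1) (n - i)).symm
    _ = pw s n := by rw [h6]

theorem exists_idem_pw [Finite S] (s : S) : ∃ n, pw s n * pw s n = pw s n := by
  obtain ⟨i, j, hne, heq⟩ := Finite.exists_ne_map_eq_of_infinite (pw s)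
  rcases hne.lt_or_gt with h | h
  · refine exists_idem_pw_aux s i (j - i) (by omega) ?_
    rw [heq]; congr 1; omega
  · refine exists_idem_pw_aux s j (i - j) (by omega) ?_
    rw [← heq]; congr 1; omega

/-- The fully symmetric configuration forces `a = b`. -/
theorem symmetric_case (hS : IsAmiable S) [Finite S] {a b : S}
    (ha : a * a = a) (hb : b * b = b)
    (R1 : RStar (a*b) a) (L1 : LStar (a*b) b)
    (R2 : RStar (b*a) b) (L2 : LStar (b*a) a) : a = b := by
  have baseR : RStar (a*b*a) a := by
    have h1 : RStar (a*(b*a)) (a*b) := rstar_mul_left a R2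
    rw [← mul_assoc] at h1
    exact rstar_trans h1 R1
  have claim2R : ∀ k, RStar (pw (a*b) k * a) a := by
    intro k; induction k with
    | zero => exact baseR
    | succ k ih =>
      have hform : pw (a*b) (k+1) * a = pw (a*b) k * (a*b*a) := by
        rw [pw_succ, mul_assoc]
      rw [hform]
      exact rstar_trans (rstar_mul_left _ baseR) ih
  have claimR : ∀ k, RStar (pw (a*b) k) a := by
    intro k; cases k with
    | zero => exact R1
    | succ k =>
      rw [pw_succ]
      exact rstar_trans (rstar_mul_left _ R1) (claim2R k)
  have baseL : LStar (b*(a*b)) b := by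
    have h1 : LStar ((b*a)*b) (a*b) := lstar_mul_right b L2
    rw [mul_assoc] at h1
    exact lstar_trans h1 L1
  have claim2L : ∀ k, LStar (b * pw (a*b) k) b := by
    intro k; induction k with
    | zero => exact baseL
    | succ k ih =>
      have hform : b * pw (a*b) (k+1) = (b*(a*b)) * pw (a*b) k := by
        rw [pw_succ, pw_comm, ← mul_assoc]
      rw [hform]
      exact lstar_trans (lstar_mul_right _ baseL) ih
  have claimL : ∀ k, LStar (pw (a*b) k) b := by
    intro k; cases k with
    | zero => exact L1
    | succ k =>
      have hform : pw (a*b) (k+1) = (a*b) * pw (a*b) k := by rw [pw_succ, pw_comm]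
      rw [hform]
      exact lstar_trans (lstar_mul_right _ L1) (claim2L k)
  obtain ⟨n, hn⟩ := exists_idem_pw (a*b)
  obtain ⟨w, -, hw⟩ := hS.2 a
  have e1 : a = w := hw a ⟨ha, rstar_refl a⟩
  have e2 : pw (a*b) n = w := hw _ ⟨hn, rstar_symm (claimR n)⟩
  obtain ⟨w', -, hw'⟩ := hS.1 b
  have e3 : b = w' := hw' b ⟨hb, lstar_refl b⟩
  have e4 : pw (a*b) n = w' := hw' _ ⟨hn, lstar_symm (claimL n)⟩
  rw [e1, ← e2, e4, ← e3]

def Dset (y : S) : Set S := {x | x * y = x ∧ y * x = x}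

theorem Dset_subset {p q : S} (h1 : p * q = p) (h2 : q * p = p) : Dset p ⊆ Dset q := by
  rintro x ⟨hx1, hx2⟩
  constructor
  · conv_lhs => rw [← hx1]
    rw [mul_assoc, h1, hx1]
  · conv_lhs => rw [← hx2]
    rw [← mul_assoc, h2, hx2]

theorem Dset_ssubset {p q : S} (hq : q * q = q) (h1 : p * q = p) (h2 : q * p = p)
    (hne : p ≠ q) : Dset p ⊂ Dset q := by
  rw [Set.ssubset_iff_subset_ne]
  refine ⟨Dset_subset h1 h2, fun hEq => hne ?_⟩
  have hqq : q ∈ Dset q := ⟨hq, hq⟩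
  rw [← hEq] at hqq
  exact h2.symm.trans hqq.1

theorem descent (hS : IsAmiable S) [Finite S] :
    ∀ n : ℕ, ∀ a b : S, a*a = a → b*b = b → a*b ≠ b*a →
      RStar (a*b) a → LStar (a*b) b →
      (Dset a).ncard + (Dset b).ncard ≤ n →
      ∃ p q : S, p*p = p ∧ q*q = q ∧ p*q ≠ q*p ∧ (p*q)*(p*q) = p*q := by
  intro n
  induction n using Nat.strong_induction_on with
  | _ n ih =>
  intro a b ha hb hne hR hL hm
  by_cases hab : (a*b)*(a*b) = a*b
  · exact ⟨a, b, ha, hb, hne, hab⟩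
  by_cases hba : (b*a)*(b*a) = b*a
  · exact ⟨b, a, hb, ha, fun h => hne h.symm, hba⟩
  obtain ⟨a', ⟨ha', hRa'⟩, -⟩ := hS.2 (b*a)
  obtain ⟨b', ⟨hb', hLb'⟩, -⟩ := hS.1 (b*a)
  have g1 : b * a' = a' := rstar_mul_eq hRa' (by rw [← mul_assoc, hb])
  have g2 : a' * b = a' := swap_left hS hb ha' g1
  have g3 : a' * (b*a) = b*a := rstar_mul_eq (rstar_symm hRa') ha'
  have g4 : b' * a = b' := lstar_mul_eq hLb' (by rw [mul_assoc, ha])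
  have g5 : a * b' = b' := swap_right hS ha hb' g4
  have g6 : (b*a) * b' = b*a := lstar_mul_eq (lstar_symm hLb') hb'
  have g8 : b*a = a'*a := by
    conv_lhs => rw [← g3]
    rw [← mul_assoc, g2]
  have g7 : b*a = a'*b' := by
    conv_lhs => rw [← g6, g8]
    rw [mul_assoc, g5]
  have hne' : a'*b' ≠ b'*a' := by
    intro hc
    apply hba
    rw [g7]
    calc (a'*b')*(a'*b') = a'*((b'*a')*b') := by
          rw [mul_assoc, ← mul_assoc b' a' b']
      _ = a'*((a'*b')*b') := by rw [← hc]
      _ = (a'*a')*(b'*b') := by rw [mul_assoc a' b' b', ← mul_assoc]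
      _ = a'*b' := by rw [ha', hb']
  by_cases hstab : a' = b ∧ b' = a
  · exfalso
    obtain ⟨hq1, hq2⟩ := hstab
    have R2 : RStar (b*a) b := by rw [hq1] at hRa'; exact hRa'
    have L2 : LStar (b*a) a := by rw [hq2] at hLb'; exact hLb'
    exact hne (by rw [symmetric_case hS ha hb hR hL R2 L2])
  · have w1 : (Dset a').ncard ≤ (Dset b).ncard :=
      Set.ncard_le_ncard (Dset_subset g2 g1) (Set.toFinite _)
    have w2 : (Dset b').ncard ≤ (Dset a).ncard :=
      Set.ncard_le_ncard (Dset_subset g4 g5) (Set.toFinite _)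
    have hlt : (Dset a').ncard + (Dset b').ncard < n := by
      rcases eq_or_ne a' b with hq | hq
      · have hb'a : b' ≠ a := fun h => hstab ⟨hq, h⟩
        have s2 := Set.ncard_lt_ncard (Dset_ssubset ha g4 g5 hb'a) (Set.toFinite _)
        omega
      · have s1 := Set.ncard_lt_ncard (Dset_ssubset hb g2 g1 hq) (Set.toFinite _)
        omega
    have hR' : RStar (a'*b') a' := by rw [g7] at hRa'; exact hRa'
    have hL' : LStar (a'*b') b' := by rw [g7] at hLb'; exact hLb'
    exact ih _ hlt a' b' ha' hb' hne' hR' hL' le_rfl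

theorem key (hS : IsAmiable S) [Finite S] {e f : S} (he : e*e = e) (hf : f*f = f)
    (hef : e*f ≠ f*e) :
    ∃ p q : S, p*p = p ∧ q*q = q ∧ p*q ≠ q*p ∧ (p*q)*(p*q) = p*q := by
  by_cases hi : (e*f)*(e*f) = e*f
  · exact ⟨e, f, he, hf, hef, hi⟩
  obtain ⟨h, ⟨hh, hR⟩, -⟩ := hS.2 (e*f)
  obtain ⟨g, ⟨hg, hL⟩, -⟩ := hS.1 (e*f)
  have f1 : e * h = h := rstar_mul_eq hR (by rw [← mul_assoc, he])
  have f2 : h * e = h := swap_left hS he hh f1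
  have f3 : h * (e*f) = e*f := rstar_mul_eq (rstar_symm hR) hh
  have f4 : g * f = g := lstar_mul_eq hL (by rw [mul_assoc, hf])
  have f5 : f * g = g := swap_right hS hf hg f4
  have f6 : (e*f) * g = e*f := lstar_mul_eq (lstar_symm hL) hg
  have f8 : e*f = h*f := by
    conv_lhs => rw [← f3]
    rw [← mul_assoc, f2]
  have f7 : e*f = h*g := by
    conv_lhs => rw [← f6, f8]
    rw [mul_assoc, f5]
  have hgh : h*g ≠ g*h := by
    intro hc
    apply hi
    rw [f7]
    calc (h*g)*(h*g) = h*((g*h)*g) := by rw [mul_assoc, ← mul_assoc g h g]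
      _ = h*((h*g)*g) := by rw [← hc]
      _ = (h*h)*(g*g) := by rw [mul_assoc h g g, ← mul_assoc]
      _ = h*g := by rw [hh, hg]
  have hR' : RStar (h*g) h := by rw [f7] at hR; exact hR
  have hL' : LStar (h*g) g := by rw [f7] at hL; exact hL
  exact descent hS ((Dset h).ncard + (Dset g).ncard) h g hh hg hgh hR' hL' le_rfl

end AmiableAux

/-- Every finite amiable semigroup which is not adequate contains an isomorphic
copy of `M`: there are idempotents `a, b` with `ab ≠ ba` and `aba = bab = ab`. -/
theorem finite_amiable_not_adequate_contains_M {S : Type*} [Semigroup S] [Finite S]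
    (hS : IsAmiable S) (e f : S) (he : e * e = e) (hf : f * f = f) (hef : e * f ≠ f * e) :
    ∃ a b : S, a * a = a ∧ b * b = b ∧ a * b ≠ b * a ∧
      a * b * a = a * b ∧ b * a * b = a * b := by
  obtain ⟨p, q, hp, hq, hne, hidem⟩ := AmiableAux.key hS he hf hef
  refine ⟨p, q, hp, hq, hne, ?_, ?_⟩
  · have h1 : p * (p*q) = p*q := by rw [← mul_assoc, hp]
    exact AmiableAux.swap_left hS hp hidem h1
  · have h2 : (p*q) * q = p*q := by rw [mul_assoc, hq]
    have h3 := AmiableAux.swap_right hS hq hidem h2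
    rw [← mul_assoc] at h3
    exact h3
end

section
/- For all elements x, y of an amiable semigroup S, (x_ℓ y)_ℓ = (xy)_ℓ; that is, if e is the unique idempotent with x 𝓛* e, f is the unique idempotent with ey 𝓛* f, and g is the unique idempotent with xy 𝓛* g, then f = g. -/
/-- In an amiable semigroup, `(x_ℓ y)_ℓ = (xy)_ℓ`: if `e` is the idempotent with
`x 𝓛* e`, `f` the idempotent with `ey 𝓛* f` and `g` the idempotent with
`xy 𝓛* g`, then `f = g`. -/
theorem lStar_idem_left_absorb {S : Type*} [Semigroup S] (hS : IsAmiable S) (x y e f g : S)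
    (he : e * e = e) (hxe : LStar x e)
    (hf : f * f = f) (heyf : LStar (e * y) f)
    (hg : g * g = g) (hxyg : LStar (x * y) g) : f = g := by
  have hxyf : LStar (x * y) f := by
    intro u v
    have h1 : ((x * y : S) : WithOne S) * u = ((x * y : S) : WithOne S) * v ↔
        ((e * y : S) : WithOne S) * u = ((e * y : S) : WithOne S) * v := by
      push_cast
      rw [mul_assoc, mul_assoc, mul_assoc, mul_assoc]
      exact hxe (↑y * u) (↑y * v)
    exact h1.trans (heyf u v)
  obtain ⟨w, -, huniq⟩ := hS.1 (x * y)
  exact (huniq f ⟨hf, hxyf⟩).trans (huniq g ⟨hg, hxyg⟩).symm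
end

section
/- Let S be an amiable semigroup and let a, b ∈ S be idempotents with ab ≠ ba. Then the following are equivalent: (i) aba = ab; (ii) bab = ab; (iii) abab = ab. -/
/-- For noncommuting idempotents `a, b` of an amiable semigroup, the conditions
`aba = ab`, `bab = ab` and `abab = ab` are equivalent. -/
theorem amiable_noncommuting_idempotents_tfae {S : Type*} [Semigroup S] (hS : IsAmiable S)
    (a b : S) (ha : a * a = a) (hb : b * b = b) (hne : a * b ≠ b * a) :
    List.TFAE [a * b * a = a * b, b * a * b = a * b, a * b * (a * b) = a * b] := by
  tfae_have 1 → 3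
  · intro h
    rw [← mul_assoc, h, mul_assoc, hb]
  tfae_have 2 → 3
  · intro h
    rw [mul_assoc, ← mul_assoc b a b, h, ← mul_assoc, ha]
  tfae_have 3 → 1
  · intro h
    have h' : a * b * a * b = a * b := by rw [mul_assoc, h]
    -- aba is idempotent
    have haba : (a * b * a) * (a * b * a) = a * b * a := by
      rw [mul_assoc (a*b) a (a*b*a), ← mul_assoc a (a*b) a, ← mul_assoc a a b, ha,
        ← mul_assoc, ← mul_assoc, h']
    -- RStar (a*b) (a*b*a)
    have hR : RStar (a * b) (a * b * a) := by
      intro u v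
      constructor
      · intro huv
        have := congrArg (fun z => z * (a : WithOne S)) huv
        simpa only [WithOne.coe_mul, ← mul_assoc] using this
      · intro huv
        have := congrArg (fun z => z * (b : WithOne S)) huv
        simp only [mul_assoc, ← WithOne.coe_mul] at this
        simp only [← mul_assoc, ← WithOne.coe_mul] at this ⊢
        rwa [mul_assoc (a*b) a b, h] at this
    obtain ⟨e, -, hu⟩ := hS.2 (a * b)
    have h1 : a * b = e := hu (a * b) ⟨h, fun u v => Iff.rfl⟩
    have h2 : a * b * a = e := hu (a * b * a) ⟨haba, hR⟩
    rw [h2, h1]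
  tfae_have 3 → 2
  · intro h
    have h' : a * b * a * b = a * b := by rw [mul_assoc, h]
    -- bab is idempotent
    have hbab : (b * a * b) * (b * a * b) = b * a * b := by
      have h'' := h'
      simp only [mul_assoc] at h'' ⊢
      rw [← mul_assoc b b, hb, h'']
    -- LStar (a*b) (b*a*b)
    have hL : LStar (a * b) (b * a * b) := by
      intro u v
      constructor
      · intro huv
        have := congrArg (fun z => (b : WithOne S) * z) huv
        simp only [← mul_assoc, ← WithOne.coe_mul] at this
        simpa only [WithOne.coe_mul, mul_assoc] using this
      · intro huv
        have := congrArg (fun z => (a : WithOne S) * z) huv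
        simp only [← mul_assoc, ← WithOne.coe_mul] at this
        rwa [h'] at this
    obtain ⟨e, -, hu⟩ := hS.1 (a * b)
    have h1 : a * b = e := hu (a * b) ⟨h, fun u v => Iff.rfl⟩
    have h2 : b * a * b = e := hu (b * a * b) ⟨hbab, hL⟩
    rw [h2, h1]
  tfae_finish
end

section
/- Let S be an amiable semigroup and let a, b ∈ S be idempotents with ab ≠ ba and aba = ab. Then the four elements a, b, ab, ba are pairwise distinct, the set {a, b, ab, ba} is closed under multiplication (so it is the subsemigroup of S generated by a and b), and, writing c = ab and d = ba, the products are given by: aa=a, ab=c, ac=c, ad=c; ba=d, bb=b, bc=c, bd=d; ca=cb=cc=cd=c; da=d, db=c, dc=c, dd=c. In particular the subsemigroup generated by a and b is isomorphic to M. -/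
/-- If `a, b` are noncommuting idempotents of an amiable semigroup with `aba = ab`,
then `a, b, ab, ba` are pairwise distinct and, writing `c = ab`, `d = ba`, they
multiply according to the table of `M`; hence `{a, b, ab, ba}` is a subsemigroup
isomorphic to `M`. -/
theorem generates_copy_of_M {S : Type*} [Semigroup S] (hS : IsAmiable S)
    (a b : S) (ha : a * a = a) (hb : b * b = b) (hne : a * b ≠ b * a)
    (haba : a * b * a = a * b) :
    (a ≠ b ∧ a ≠ a * b ∧ a ≠ b * a ∧ b ≠ a * b ∧ b ≠ b * a ∧ a * b ≠ b * a) ∧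
    (a * a = a ∧ a * (a * b) = a * b ∧ a * (b * a) = a * b ∧
     b * a = b * a ∧ b * b = b ∧ b * (a * b) = a * b ∧ b * (b * a) = b * a ∧
     (a * b) * a = a * b ∧ (a * b) * b = a * b ∧
     (a * b) * (a * b) = a * b ∧ (a * b) * (b * a) = a * b ∧
     (b * a) * a = b * a ∧ (b * a) * b = a * b ∧
     (b * a) * (a * b) = a * b ∧ (b * a) * (b * a) = a * b) := by
  -- basic identities
  have habb : (a * b) * b = a * b := by rw [mul_assoc, hb]
  have hab2 : (a * b) * (a * b) = a * b := by
    rw [← mul_assoc, haba, mul_assoc, hb]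
  have habab : a * (b * (a * b)) = a * b := by rw [← mul_assoc]; exact hab2
  have hbab2 : (b * (a * b)) * (b * (a * b)) = b * (a * b) := by
    have key : (a * b) * (b * (a * b)) = a * b := by
      rw [← mul_assoc, habb, hab2]
    calc (b * (a * b)) * (b * (a * b)) = b * ((a * b) * (b * (a * b))) :=
          mul_assoc _ _ _
      _ = b * (a * b) := by rw [key]
  -- the key amiability step: `ab 𝓛* bab`, hence `bab = ab`.
  have hL : LStar (a * b) (b * (a * b)) := by
    intro u v
    constructor
    · intro h
      calc ((b * (a * b) : S) : WithOne S) * u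
            = (b : WithOne S) * (((a * b : S) : WithOne S) * u) := by
              simp only [WithOne.coe_mul, mul_assoc]
        _ = (b : WithOne S) * (((a * b : S) : WithOne S) * v) := by rw [h]
        _ = ((b * (a * b) : S) : WithOne S) * v := by
              simp only [WithOne.coe_mul, mul_assoc]
    · intro h
      calc ((a * b : S) : WithOne S) * u
            = ((a * (b * (a * b)) : S) : WithOne S) * u := by rw [habab]
        _ = (a : WithOne S) * (((b * (a * b) : S) : WithOne S) * u) := by
              simp only [WithOne.coe_mul, mul_assoc]
        _ = (a : WithOne S) * (((b * (a * b) : S) : WithOne S) * v) := by rw [h]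
        _ = ((a * (b * (a * b)) : S) : WithOne S) * v := by
              simp only [WithOne.coe_mul, mul_assoc]
        _ = ((a * b : S) : WithOne S) * v := by rw [habab]
  obtain ⟨e, -, hu⟩ := hS.1 (a * b)
  have h1 : (a * b : S) = e := hu (a * b) ⟨hab2, fun u v => Iff.rfl⟩
  have h2 : (b * (a * b) : S) = e := hu (b * (a * b)) ⟨hbab2, hL⟩
  have hbab : b * (a * b) = a * b := h2.trans h1.symm
  -- remaining table entries
  have haab : a * (a * b) = a * b := by rw [← mul_assoc, ha]
  have haba' : a * (b * a) = a * b := by rw [← mul_assoc]; exact haba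
  have hbba : b * (b * a) = b * a := by rw [← mul_assoc, hb]
  have habba : (a * b) * (b * a) = a * b := by
    rw [← mul_assoc, habb, haba]
  have hbaa : (b * a) * a = b * a := by rw [mul_assoc, ha]
  have hbab' : (b * a) * b = a * b := by rw [mul_assoc]; exact hbab
  have hbaab : (b * a) * (a * b) = a * b := by
    rw [← mul_assoc, hbaa, mul_assoc]; exact hbab
  have hbaba : (b * a) * (b * a) = a * b := by
    rw [← mul_assoc, hbab', haba]
  -- distinctness
  have hne1 : a ≠ b := fun h => hne (by rw [h])
  have hne2 : a ≠ a * b := by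
    intro h
    apply hne
    calc a * b = b * (a * b) := hbab.symm
      _ = b * a := by rw [← h]
  have hne3 : a ≠ b * a := by
    intro h
    apply hne2
    calc a = a * a := ha.symm
      _ = a * (b * a) := by rw [← h]
      _ = a * b := haba'
  have hne4 : b ≠ a * b := by
    intro h
    apply hne
    calc a * b = (a * b) * a := haba.symm
      _ = b * a := by rw [← h]
  have hne5 : b ≠ b * a := by
    intro h
    apply hne4
    calc b = b * b := hb.symm
      _ = (b * a) * b := by rw [← h]
      _ = a * b := hbab'
  exact ⟨⟨hne1, hne2, hne3, hne4, hne5, hne⟩,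
    ha, haab, haba', rfl, hb, hbab, hbba, haba, habb, hab2, habba,
    hbaa, hbab', hbaab, hbaba⟩
end

section
/- Let S be an amiable semigroup. Then the following are equivalent: (1) for all idempotents x, y ∈ S, xyx = xy implies xy = yx; (2) for all idempotents x, y ∈ S, xyx = yx implies xy = yx; (3) for all idempotents x, y ∈ S, xyxy = xy implies xy = yx; (4) S avoids M, i.e., S contains no four pairwise distinct elements a, b, c, d satisfying aa=a, ab=c, ac=c, ad=c, ba=d, bb=b, bc=c, bd=d, ca=cb=cc=cd=c, da=d, db=c, dc=c, dd=c. -/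
/-- A semigroup `S` avoids `M` iff it contains no four pairwise distinct elements
realizing the multiplication table of the four-element semigroup `M`. -/
def AvoidsM (S : Type*) [Semigroup S] : Prop :=
  ¬ ∃ a b c d : S,
      (a ≠ b ∧ a ≠ c ∧ a ≠ d ∧ b ≠ c ∧ b ≠ d ∧ c ≠ d) ∧
      a * a = a ∧ a * b = c ∧ a * c = c ∧ a * d = c ∧
      b * a = d ∧ b * b = b ∧ b * c = c ∧ b * d = d ∧
      c * a = c ∧ c * b = c ∧ c * c = c ∧ c * d = c ∧
      d * a = d ∧ d * b = c ∧ d * c = c ∧ d * d = c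

private lemma lstar_of_mul {S : Type*} [Semigroup S] {e f a b : S}
    (ha : a * f = e) (hb : b * e = f) : LStar e f := by
  intro u v
  constructor
  · intro h
    rw [← hb, WithOne.coe_mul, mul_assoc, mul_assoc, h]
  · intro h
    rw [← ha, WithOne.coe_mul, mul_assoc, mul_assoc, h]

private lemma rstar_of_mul {S : Type*} [Semigroup S] {e f a b : S}
    (ha : f * a = e) (hb : e * b = f) : RStar e f := by
  intro u v
  constructor
  · intro h
    rw [← hb, WithOne.coe_mul, ← mul_assoc, ← mul_assoc, h]
  · intro h
    rw [← ha, WithOne.coe_mul, ← mul_assoc, ← mul_assoc, h]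

private lemma idem_eq_of_lstar {S : Type*} [Semigroup S] (hS : IsAmiable S) {e f : S}
    (he : e * e = e) (hf : f * f = f) (h : LStar e f) : e = f := by
  obtain ⟨g, -, hu⟩ := hS.1 e
  rw [hu e ⟨he, fun u v => Iff.rfl⟩, hu f ⟨hf, h⟩]

private lemma idem_eq_of_rstar {S : Type*} [Semigroup S] (hS : IsAmiable S) {e f : S}
    (he : e * e = e) (hf : f * f = f) (h : RStar e f) : e = f := by
  obtain ⟨g, -, hu⟩ := hS.2 e
  rw [hu e ⟨he, fun u v => Iff.rfl⟩, hu f ⟨hf, h⟩]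

/-- In an amiable semigroup, `xyx = xy` for idempotents `x, y` implies `yxy = xy`. -/
private lemma key1 {S : Type*} [Semigroup S] (hS : IsAmiable S) {x y : S}
    (hy : y * y = y) (h : x * y * x = x * y) :
    y * (x * y) = x * y := by
  have he : (x * y) * (x * y) = x * y := by
    rw [← mul_assoc, h, mul_assoc, hy]
  have hey : (x * y) * y = x * y := by rw [mul_assoc, hy]
  have hf : (y * (x * y)) * (y * (x * y)) = y * (x * y) := by
    rw [mul_assoc, ← mul_assoc (x * y) y (x * y), hey, he]
  have ha : x * (y * (x * y)) = x * y := by rw [← mul_assoc, he]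
  exact (idem_eq_of_lstar hS he hf (lstar_of_mul ha rfl)).symm

/-- In an amiable semigroup, `xyx = yx` for idempotents `x, y` implies `yxy = yx`. -/
private lemma key2 {S : Type*} [Semigroup S] (hS : IsAmiable S) {x y : S}
    (hy : y * y = y) (h : x * y * x = y * x) :
    (y * x) * y = y * x := by
  have he : (y * x) * (y * x) = y * x := by
    rw [mul_assoc, ← mul_assoc x y x, h, ← mul_assoc, hy]
  have hye : y * (y * x) = y * x := by rw [← mul_assoc, hy]
  have hf : ((y * x) * y) * ((y * x) * y) = (y * x) * y := by
    rw [mul_assoc, ← mul_assoc y (y * x) y, hye, ← mul_assoc, he]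
  have ha : ((y * x) * y) * x = y * x := by rw [mul_assoc, he]
  exact (idem_eq_of_rstar hS he hf (rstar_of_mul ha rfl)).symm

/-- In an amiable semigroup, `(xy)² = xy` for an idempotent `x` implies `xyx = xy`. -/
private lemma key3 {S : Type*} [Semigroup S] (hS : IsAmiable S) {x y : S}
    (hx : x * x = x) (h : x * y * (x * y) = x * y) :
    (x * y) * x = x * y := by
  have hxe : x * (x * y) = x * y := by rw [← mul_assoc, hx]
  have hf : ((x * y) * x) * ((x * y) * x) = (x * y) * x := by
    rw [mul_assoc, ← mul_assoc x (x * y) x, hxe, ← mul_assoc, h]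
  have ha : ((x * y) * x) * y = x * y := by rw [mul_assoc, h]
  exact (idem_eq_of_rstar hS h hf (rstar_of_mul ha rfl)).symm

/-- For an amiable semigroup `S`, the three quasi-identities on idempotents and
avoidance of `M` are all equivalent. -/
theorem avoidsM_tfae {S : Type*} [Semigroup S] (hS : IsAmiable S) :
    List.TFAE [
      ∀ x y : S, x * x = x → y * y = y → x * y * x = x * y → x * y = y * x,
      ∀ x y : S, x * x = x → y * y = y → x * y * x = y * x → x * y = y * x,
      ∀ x y : S, x * x = x → y * y = y → x * y * (x * y) = x * y → x * y = y * x,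
      AvoidsM S] := by
  tfae_have h14 : 1 → 4 := by
    intro h1
    rintro ⟨a, b, c, d, ⟨hab, hac, had, hbc, hbd, hcd⟩, haa, habc, -, -, hbad, hbb, -, -,
      hca, -, -, -, -, -, -, -⟩
    have key := h1 a b haa hbb (by rw [habc, hca])
    rw [habc, hbad] at key
    exact hcd key
  tfae_have h24 : 2 → 4 := by
    intro h2
    rintro ⟨a, b, c, d, ⟨hab, hac, had, hbc, hbd, hcd⟩, haa, habc, -, -, hbad, hbb, -, -,
      -, -, -, -, -, hdb, -, -⟩
    have key := h2 b a hbb haa (by rw [hbad, hdb, habc])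
    rw [hbad, habc] at key
    exact hcd key.symm
  tfae_have h34 : 3 → 4 := by
    intro h3
    rintro ⟨a, b, c, d, ⟨hab, hac, had, hbc, hbd, hcd⟩, haa, habc, -, -, hbad, hbb, -, -,
      -, -, hcc, -, -, -, -, -⟩
    have key := h3 a b haa hbb (by rw [habc, hcc])
    rw [habc, hbad] at key
    exact hcd key
  tfae_have h41 : 4 → 1 := by
    intro h4 x y hx hy hxyx
    by_contra hne
    have L := key1 hS hy hxyx
    refine absurd ?_ h4
    refine ⟨x, y, x * y, y * x, ⟨?_, ?_, ?_, ?_, ?_, hne⟩,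
      hx, rfl, ?_, ?_, rfl, hy, L, ?_, hxyx, ?_, ?_, ?_, ?_, ?_, ?_, ?_⟩
    · exact fun he => hne (by rw [he])
    · intro he
      apply hne
      conv_rhs => rw [he]
      rw [L]
    · intro he
      have h1 : x * y = x := by rw [← hxyx, mul_assoc, ← he, hx]
      exact hne (by rw [h1, ← he])
    · intro he
      have h1 : y * x = x * y := by
        conv_lhs => rw [he]
        exact hxyx
      exact hne h1.symm
    · intro he
      have h1 : y * (x * y) = y := by rw [← mul_assoc, ← he, hy]
      exact hne (by rw [← L, h1]; exact he)
    · rw [← mul_assoc, hx]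
    · rw [← mul_assoc, hxyx]
    · rw [← mul_assoc, hy]
    · rw [mul_assoc, hy]
    · rw [← mul_assoc, hxyx, mul_assoc, hy]
    · rw [← mul_assoc, mul_assoc x y y, hy, hxyx]
    · rw [mul_assoc, hx]
    · rw [mul_assoc]; exact L
    · rw [mul_assoc, ← mul_assoc x x y, hx]; exact L
    · rw [← mul_assoc, mul_assoc y x y, L, hxyx]
  tfae_have h42 : 4 → 2 := by
    intro h4 x y hx hy hxyx
    by_contra hne
    have L2 := key2 hS hy hxyx
    refine absurd ?_ h4
    refine ⟨y, x, y * x, x * y, ⟨?_, ?_, ?_, ?_, ?_, fun he => hne he.symm⟩,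
      hy, rfl, ?_, ?_, rfl, hx, ?_, ?_, L2, ?_, ?_, ?_, ?_, hxyx, ?_, ?_⟩
    · exact fun he => hne (by rw [he])
    · intro he
      apply hne
      conv_lhs => rw [he]
      rw [← mul_assoc]
      exact hxyx
    · intro he
      have h1 : y * x = y := by rw [← L2, mul_assoc, ← he, hy]
      exact hne (by rw [h1, ← he])
    · intro he
      exact hne (by conv_lhs => rw [he]; rw [L2])
    · intro he
      have h1 : x = y * x := by rw [← hxyx, ← he, hx]
      exact hne (by conv_lhs => rw [h1]; rw [L2])
    · rw [← mul_assoc, hy]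
    · rw [← mul_assoc]; exact L2
    · rw [← mul_assoc]; exact hxyx
    · rw [← mul_assoc, hx]
    · rw [mul_assoc, hx]
    · rw [← mul_assoc, L2, mul_assoc, hx]
    · rw [← mul_assoc, mul_assoc y x x, hx, L2]
    · rw [mul_assoc, hy]
    · rw [← mul_assoc, mul_assoc x y y, hy, hxyx]
    · rw [← mul_assoc, hxyx, L2]
  tfae_have h43 : 4 → 3 := by
    intro h4 x y hx hy h
    exact h41 h4 x y hx hy (key3 hS hx h)
  tfae_finish
end

section
/- Let S be an amiable semigroup which avoids M, and let c ∈ S be an idempotent. Then for all x ∈ S, x·(xc)_ℓ = xc, where (xc)_ℓ denotes the unique idempotent in the 𝓛*-class of xc. -/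
/-- In an amiable semigroup avoiding `M`, for an idempotent `c` and any `x`,
`x * (xc)_ℓ = xc`, where `(xc)_ℓ` is the unique idempotent `𝓛*`-related to `xc`. -/
theorem mul_lStar_idem_of_avoidsM {S : Type*} [Semigroup S] (hS : IsAmiable S)
    (hM : AvoidsM S) (c : S) (hc : c * c = c) (x e : S)
    (he : e * e = e) (hxce : LStar (x * c) e) :
    x * e = x * c := by
  -- Step 1: e * c = e
  have hec : e * c = e := by
    have h := (hxce (c : WithOne S) 1).mp (by
      rw [mul_one, ← WithOne.coe_mul, mul_assoc, hc])
    rw [mul_one, ← WithOne.coe_mul] at h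
    exact_mod_cast h
  -- Step 2: (x*c)*e = x*c
  have hxcee : (x * c) * e = x * c := by
    have h := (hxce (e : WithOne S) 1).mpr (by
      rw [mul_one, ← WithOne.coe_mul, he])
    rw [mul_one, ← WithOne.coe_mul] at h
    exact_mod_cast h
  -- Step 3: c*e is idempotent
  have hfid : (c * e) * (c * e) = c * e := by
    have : (c * e) * (c * e) = c * ((e * c) * e) := by
      simp only [mul_assoc]
    rw [this, hec, he]
  -- e * (c * e) = e
  have hecf : e * (c * e) = e := by
    rw [← mul_assoc, hec, he]
  -- Step 4: LStar e (c*e)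
  have hLef : LStar e (c * e) := by
    intro u v
    constructor
    · intro h
      calc ((c * e : S) : WithOne S) * u = (c : WithOne S) * ((e : S) * u) := by
            rw [WithOne.coe_mul, mul_assoc]
        _ = (c : WithOne S) * ((e : S) * v) := by rw [h]
        _ = ((c * e : S) : WithOne S) * v := by rw [WithOne.coe_mul, mul_assoc]
    · intro h
      calc ((e : S) : WithOne S) * u = (e : WithOne S) * (((c * e : S) : WithOne S) * u) := by
            rw [← mul_assoc, ← WithOne.coe_mul, hecf]
        _ = (e : WithOne S) * (((c * e : S) : WithOne S) * v) := by rw [h]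
        _ = ((e : S) : WithOne S) * v := by rw [← mul_assoc, ← WithOne.coe_mul, hecf]
  -- Step 5: by uniqueness, c*e = e
  obtain ⟨e₀, _, huniq⟩ := hS.1 e
  have h1 : e = e₀ := huniq e ⟨he, fun u v => Iff.rfl⟩
  have h2 : c * e = e₀ := huniq (c * e) ⟨hfid, hLef⟩
  have hce : c * e = e := h2.trans h1.symm
  -- Conclusion
  calc x * e = x * (c * e) := by rw [hce]
    _ = (x * c) * e := by rw [mul_assoc]
    _ = x * c := hxcee
end

section
/- Let S be an amiable semigroup which avoids M, and let c ∈ S be an idempotent. Then for all x ∈ S, x_ℓ·(xc)_ℓ = x_ℓ·c, where x_ℓ denotes the unique idempotent in the 𝓛*-class of x and (xc)_ℓ denotes the unique idempotent in the 𝓛*-class of xc. -/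
/-- In an amiable semigroup avoiding `M`, for an idempotent `c` and any `x`,
`x_ℓ * (xc)_ℓ = x_ℓ * c`, where `x_ℓ` (resp. `(xc)_ℓ`) is the unique idempotent
`𝓛*`-related to `x` (resp. to `xc`). -/
theorem lStar_idem_mul_lStar_idem_of_avoidsM {S : Type*} [Semigroup S] (hS : IsAmiable S)
    (hM : AvoidsM S) (c : S) (hc : c * c = c) (x e f : S)
    (he : e * e = e) (hxe : LStar x e)
    (hf : f * f = f) (hxcf : LStar (x * c) f) :
    e * f = e * c := by
  -- `f * c = f`
  have hfc : f * c = f := by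
    have h : (f : WithOne S) * c = (f : WithOne S) * 1 :=
      (hxcf (c : WithOne S) 1).mp (by
        rw [mul_one, ← WithOne.coe_mul]
        exact congrArg _ (by rw [mul_assoc, hc]))
    rw [mul_one, ← WithOne.coe_mul] at h
    exact_mod_cast h
  -- `c * f` is idempotent
  have hcf_idem : (c * f) * (c * f) = c * f := by
    rw [mul_assoc, ← mul_assoc f c f, hfc, hf]
  -- `f 𝓛* c * f`
  have hLcf : LStar f (c * f) := by
    intro u v
    have key : ∀ w : WithOne S, (f : WithOne S) * (((c * f : S) : WithOne S) * w)
        = (f : WithOne S) * w := by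
      intro w
      rw [← mul_assoc, ← WithOne.coe_mul, ← mul_assoc, hfc, hf]
    constructor
    · intro h
      rw [WithOne.coe_mul, mul_assoc, mul_assoc, h]
    · intro h
      rw [← key u, h, key v]
  -- by uniqueness of idempotents in an `𝓛*`-class, `c * f = f`
  have hcf : c * f = f :=
    (hS.1 f).unique ⟨hcf_idem, hLcf⟩ ⟨hf, fun u v => Iff.rfl⟩
  -- `x * (c * f) = x * c`
  have hx1 : (x : WithOne S) * ((c * f : S) : WithOne S) = (x : WithOne S) * c := by
    have h : ((x * c : S) : WithOne S) * f = ((x * c : S) : WithOne S) * 1 :=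
      (hxcf (f : WithOne S) 1).mpr (by rw [mul_one, ← WithOne.coe_mul, hf])
    rw [mul_one] at h
    rw [WithOne.coe_mul, ← mul_assoc, ← WithOne.coe_mul, h]
  -- transfer along `x 𝓛* e`
  have h2 : (e : WithOne S) * ((c * f : S) : WithOne S) = (e : WithOne S) * c :=
    (hxe _ _).mp hx1
  rw [← WithOne.coe_mul, ← WithOne.coe_mul] at h2
  have h3 : e * (c * f) = e * c := by exact_mod_cast h2
  rw [hcf] at h3
  exact h3
end

section
/- Let S be an amiable semigroup which avoids M, let c, x ∈ S, and assume c is an idempotent. If cx = xc, then c·x_ℓ = x_ℓ·c, where x_ℓ denotes the unique idempotent in the 𝓛*-class of x. -/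
/-- In an amiable semigroup avoiding `M`, if an idempotent `c` commutes with `x`,
then `c` commutes with `x_ℓ`, the unique idempotent `𝓛*`-related to `x`. -/
theorem idem_comm_lStar_idem_of_avoidsM {S : Type*} [Semigroup S] (hS : IsAmiable S)
    (hM : AvoidsM S) (c x e : S) (hc : c * c = c) (hcx : c * x = x * c)
    (he : e * e = e) (hxe : LStar x e) :
    c * e = e * c := by
  -- Step 1: x * e = x
  have h1 : x * e = x := by
    have h0 : (x : WithOne S) * (e : S) = (x : WithOne S) * 1 := by
      refine (hxe (e : S) 1).mpr ?_
      rw [mul_one, ← WithOne.coe_mul, he]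
    rw [mul_one, ← WithOne.coe_mul] at h0
    exact_mod_cast h0
  -- Step 2: e * (c * e) = e * c
  have hece : e * (c * e) = e * c := by
    have hx : (x : WithOne S) * ((c * e : S) : WithOne S) = (x : WithOne S) * (c : S) := by
      rw [← WithOne.coe_mul, ← WithOne.coe_mul]
      congr 1
      rw [← mul_assoc, ← hcx, mul_assoc, h1, hcx]
    have h0 := (hxe ((c * e : S) : WithOne S) (c : S)).mp hx
    rw [← WithOne.coe_mul, ← WithOne.coe_mul] at h0
    exact_mod_cast h0
  -- idempotents e*c and c*(e*c)
  have hf : (e * c) * (e * c) = e * c := by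
    rw [mul_assoc, ← mul_assoc c e c, ← mul_assoc e (c * e) c, hece, mul_assoc, hc]
  have hfc : (e * c) * c = e * c := by rw [mul_assoc, hc]
  have hfg : (e * c) * (c * (e * c)) = e * c := by rw [← mul_assoc, hfc, hf]
  have hg : (c * (e * c)) * (c * (e * c)) = c * (e * c) := by rw [mul_assoc, hfg]
  have hgf : (c * (e * c)) * (e * c) = c * (e * c) := by rw [mul_assoc, hf]
  -- e*c and c*(e*c) are L*-related
  have hLfg : LStar (e * c) (c * (e * c)) := by
    intro u v
    constructor
    · intro h
      calc ((c * (e * c) : S) : WithOne S) * u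
          = ((c * (e * c) * (e * c) : S) : WithOne S) * u := by rw [hgf]
        _ = ((c * (e * c) : S) : WithOne S) * (((e * c : S) : WithOne S) * u) := by
            simp only [WithOne.coe_mul, mul_assoc]
        _ = ((c * (e * c) : S) : WithOne S) * (((e * c : S) : WithOne S) * v) := by rw [h]
        _ = ((c * (e * c) * (e * c) : S) : WithOne S) * v := by
            simp only [WithOne.coe_mul, mul_assoc]
        _ = ((c * (e * c) : S) : WithOne S) * v := by rw [hgf]
    · intro h
      calc ((e * c : S) : WithOne S) * u
          = ((e * c * (c * (e * c)) : S) : WithOne S) * u := by rw [hfg]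
        _ = ((e * c : S) : WithOne S) * (((c * (e * c) : S) : WithOne S) * u) := by
            simp only [WithOne.coe_mul, mul_assoc]
        _ = ((e * c : S) : WithOne S) * (((c * (e * c) : S) : WithOne S) * v) := by rw [h]
        _ = ((e * c * (c * (e * c)) : S) : WithOne S) * v := by
            simp only [WithOne.coe_mul, mul_assoc]
        _ = ((e * c : S) : WithOne S) * v := by rw [hfg]
  -- by uniqueness of the idempotent in the L*-class of e*c:
  have hcec : c * (e * c) = e * c := by
    obtain ⟨w, _, hwu⟩ := hS.1 (e * c)
    have hA := hwu (e * c) ⟨hf, fun u v => Iff.rfl⟩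
    have hB := hwu (c * (e * c)) ⟨hg, hLfg⟩
    exact hB.trans hA.symm
  -- general-form rewriting lemmas
  have he2 : ∀ t : S, e * (e * t) = e * t := fun t => by rw [← mul_assoc, he]
  have hc2 : ∀ t : S, c * (c * t) = c * t := fun t => by rw [← mul_assoc, hc]
  have hece2 : ∀ t : S, e * (c * (e * t)) = e * (c * t) := fun t => by
    rw [← mul_assoc c e t, ← mul_assoc, hece, mul_assoc]
  have hcec2 : ∀ t : S, c * (e * (c * t)) = e * (c * t) := fun t => by
    rw [← mul_assoc e c t, ← mul_assoc, hcec, mul_assoc]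
  -- if c*e ≠ e*c, we find a copy of M on {e, c, e*c, c*e}
  by_contra hne
  apply hM
  refine ⟨e, c, e * c, c * e, ⟨?_, ?_, ?_, ?_, ?_, ?_⟩, he, rfl, ?_, ?_, rfl, hc,
    ?_, ?_, ?_, ?_, ?_, ?_, ?_, ?_, ?_, ?_⟩
  · -- e ≠ c
    intro h
    exact hne (by rw [h])
  · -- e ≠ e*c
    intro h
    have h2 : c * e = c * (e * c) := by rw [← h]
    exact hne (h2.trans hcec)
  · -- e ≠ c*e
    intro h
    have hdd : (c * e) * (c * e) = e * c := by
      simp only [mul_assoc, hece, hcec]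
    have h2 : e = e * c := by
      conv_lhs => rw [← he, h]
      rw [hdd]
    exact hne (h.symm.trans h2)
  · -- c ≠ e*c
    intro h
    apply hne
    conv_lhs => rw [h]
    rw [mul_assoc, hece]
  · -- c ≠ c*e
    intro h
    have h2 : c * (e * c) = c := by rw [← mul_assoc, ← h, hc]
    exact hne (h.symm.trans (hcec.symm.trans h2).symm)
  · -- e*c ≠ c*e
    exact fun h' => hne h'.symm
  all_goals simp only [mul_assoc, he, hc, hece, hcec, he2, hc2, hece2, hcec2]
end

section
/- Let S be an amiable semigroup which avoids M, let a, b ∈ S be idempotents, and suppose there exist positive integers m, n with m > n such that (ab)^m = (ab)^n. Then (ab)^{n+1} = (ab)^n. -/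
/-- In an amiable semigroup avoiding `M`, if `a, b` are idempotents and
`(ab)^M = (ab)^N` for some positive integers `M = m+1 > N = n+1`, then
`(ab)^(N+1) = (ab)^N`.  (Here `ABm a b k = (ab)^(k+1)`.) -/
theorem pow_ab_stabilizes {S : Type*} [Semigroup S] (hS : IsAmiable S) (hM : AvoidsM S)
    (a b : S) (ha : a * a = a) (hb : b * b = b) (m n : ℕ) (hmn : n < m)
    (h : ABm a b m = ABm a b n) :
    ABm a b (n + 1) = ABm a b n := by
  set x : S := a * b with hx
  set X : WithOne S := (x : WithOne S) with hX
  have hcoe : ∀ k : ℕ, ((ABm a b k : S) : WithOne S) = X ^ (k + 1) := by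
    intro k
    induction k with
    | zero => simp [ABm, hX, hx]
    | succ k ih =>
      show ((x * ABm a b k : S) : WithOne S) = X ^ (k + 1 + 1)
      rw [WithOne.coe_mul, ih, ← hX]
      exact (pow_succ' X (k + 1)).symm
  set N : ℕ := n + 1 with hN
  set p : ℕ := m - n with hp
  have hp1 : 1 ≤ p := by omega
  have hNp : X ^ (N + p) = X ^ N := by
    have h1 := congrArg (fun s : S => (s : WithOne S)) h
    simp only [hcoe] at h1
    have h2 : m + 1 = N + p := by omega
    rw [← h2]; exact h1
  have hper : ∀ t, N ≤ t → X ^ (t + p) = X ^ t := by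
    intro t ht
    have h1 : X ^ (t + p) = X ^ (t - N) * X ^ (N + p) := by
      rw [← pow_add]; congr 1; omega
    rw [h1, hNp, ← pow_add]
    congr 1; omega
  have hrep : ∀ j t, N ≤ t → X ^ (t + j * p) = X ^ t := by
    intro j
    induction j with
    | zero => intro t ht; simp
    | succ j ih =>
      intro t ht
      have h1 : t + (j + 1) * p = (t + j * p) + p := by ring
      rw [h1, hper _ (by omega), ih t ht]
  set q : ℕ := N * p with hq
  have hqN : N ≤ q := Nat.le_mul_of_pos_right N hp1
  have hq1 : 1 ≤ q := by omega
  set e : S := ABm a b (q - 1) with he_def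
  have hecoe : ((e : S) : WithOne S) = X ^ q := by
    rw [he_def, hcoe]; congr 1; omega
  have coeinj : ∀ s t : S, ((s : S) : WithOne S) = t → s = t := by
    intro s t hst; exact_mod_cast hst
  have hax : a * x = x := by rw [hx, ← mul_assoc, ha]
  have hxb : x * b = x := by rw [hx, mul_assoc, hb]
  have hee : e * e = e := by
    apply coeinj
    rw [WithOne.coe_mul, hecoe, ← pow_add]
    have h1 : q + q = q + N * p := by rw [hq]
    rw [h1, hrep N q hqN]
  have hae : a * e = e := by
    apply coeinj
    rw [WithOne.coe_mul, hecoe]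
    have h1 : X ^ q = X * X ^ (q - 1) := by
      rw [← pow_succ']; congr 1; omega
    rw [h1, ← mul_assoc, ← WithOne.coe_mul, hax]
  have heb : e * b = e := by
    apply coeinj
    rw [WithOne.coe_mul, hecoe]
    have h1 : X ^ q = X ^ (q - 1) * X := by
      rw [← pow_succ]; congr 1; omega
    rw [h1, mul_assoc, ← WithOne.coe_mul, hxb]
  -- e * a = e via uniqueness of the idempotent in the R*-class of e
  have heae : (e * a) * e = e := by rw [mul_assoc, hae, hee]
  have hea_idem : (e * a) * (e * a) = e * a := by
    rw [← mul_assoc, heae]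
  have hea_R : RStar e (e * a) := by
    intro u v
    constructor
    · intro huv
      rw [WithOne.coe_mul, ← mul_assoc, ← mul_assoc, huv]
    · intro huv
      have h1 : u * ((e * a : S) : WithOne S) * ((e : S) : WithOne S)
          = v * ((e * a : S) : WithOne S) * ((e : S) : WithOne S) := by rw [huv]
      rw [mul_assoc, mul_assoc, ← WithOne.coe_mul, heae] at h1
      exact h1
  have hea : e * a = e := by
    obtain ⟨f, _, huniq⟩ := hS.2 e
    have h1 : e * a = f := huniq (e * a) ⟨hea_idem, hea_R⟩
    have h2 : e = f := huniq e ⟨hee, fun u v => Iff.rfl⟩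
    rw [h1, ← h2]
  -- b * e = e via uniqueness of the idempotent in the L*-class of e
  have hebe : e * (b * e) = e := by rw [← mul_assoc, heb, hee]
  have hbe_idem : (b * e) * (b * e) = b * e := by
    rw [mul_assoc, hebe]
  have hbe_L : LStar e (b * e) := by
    intro u v
    constructor
    · intro huv
      rw [WithOne.coe_mul, mul_assoc, mul_assoc, huv]
    · intro huv
      have h1 : ((e : S) : WithOne S) * (((b * e : S) : WithOne S) * u)
          = ((e : S) : WithOne S) * (((b * e : S) : WithOne S) * v) := by rw [huv]
      rw [← mul_assoc, ← mul_assoc, ← WithOne.coe_mul, hebe] at h1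
      exact h1
  have hbe : b * e = e := by
    obtain ⟨f, _, huniq⟩ := hS.1 e
    have h1 : b * e = f := huniq (b * e) ⟨hbe_idem, hbe_L⟩
    have h2 : e = f := huniq e ⟨hee, fun u v => Iff.rfl⟩
    rw [h1, ← h2]
  have hxe : x * e = e := by rw [hx, mul_assoc, hbe, hae]
  have hXq : X * X ^ q = X ^ q := by
    rw [← hecoe, hX, ← WithOne.coe_mul, hxe]
  have hstab : ∀ s, X ^ (q + s) = X ^ q := by
    intro s
    induction s with
    | zero => rfl
    | succ s ih =>
      have h1 : q + (s + 1) = (q + s) + 1 := rfl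
      rw [h1, pow_succ, ih, ← pow_succ, pow_succ', hXq]
  have key : ∀ t, N ≤ t → X ^ t = X ^ q := by
    intro t ht
    have h1 := hrep N t ht
    have h2 : t + N * p = q + t := by rw [hq, Nat.add_comm]
    rw [h2, hstab t] at h1
    exact h1.symm
  apply coeinj
  rw [hcoe, hcoe, key (n + 1 + 1) (by omega), key (n + 1) (by omega)]
end

section
/- Let S be an amiable semigroup which avoids M, let a, b ∈ S be idempotents, and suppose (ab)^{n+1} = (ab)^n for some integer n ≥ 1. Then ab = ba. -/
section AmiableHelpers

variable {S : Type*} [Semigroup S]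

private lemma lstar_refl (x : S) : LStar x x := fun _ _ => Iff.rfl

private lemma rstar_refl (x : S) : RStar x x := fun _ _ => Iff.rfl

private lemma lstar_iff {x e : S} (h : LStar x e) (u v : S) :
    x * u = x * v ↔ e * u = e * v := by
  have := h (u : WithOne S) (v : WithOne S)
  simpa only [← WithOne.coe_mul, WithOne.coe_inj] using this

private lemma lstar_iff_one {x e : S} (h : LStar x e) (u : S) :
    x * u = x ↔ e * u = e := by
  have := h (u : WithOne S) 1
  simpa only [mul_one, ← WithOne.coe_mul, WithOne.coe_inj] using this

private lemma rstar_iff {x f : S} (h : RStar x f) (u v : S) :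
    u * x = v * x ↔ u * f = v * f := by
  have := h (u : WithOne S) (v : WithOne S)
  simpa only [← WithOne.coe_mul, WithOne.coe_inj] using this

private lemma rstar_iff_one {x f : S} (h : RStar x f) (u : S) :
    u * x = x ↔ u * f = f := by
  have := h (u : WithOne S) 1
  simpa only [one_mul, ← WithOne.coe_mul, WithOne.coe_inj] using this

private lemma lstar_of_cert {p q w w' : S} (h1 : w * p = q) (h2 : w' * q = p) :
    LStar p q := by
  intro u v
  have hq : (q : WithOne S) = (w : WithOne S) * p := by rw [← WithOne.coe_mul, h1]
  have hp : (p : WithOne S) = (w' : WithOne S) * q := by rw [← WithOne.coe_mul, h2]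
  constructor
  · intro h
    rw [hq, mul_assoc, mul_assoc, h]
  · intro h
    rw [hp, mul_assoc, mul_assoc, h]

private lemma rstar_of_cert {p q w w' : S} (h1 : p * w = q) (h2 : q * w' = p) :
    RStar p q := by
  intro u v
  have hq : (q : WithOne S) = (p : WithOne S) * w := by rw [← WithOne.coe_mul, h1]
  have hp : (p : WithOne S) = (q : WithOne S) * w' := by rw [← WithOne.coe_mul, h2]
  constructor
  · intro h
    rw [hq, ← mul_assoc, ← mul_assoc, h]
  · intro h
    rw [hp, ← mul_assoc, ← mul_assoc, h]

/-- Two idempotents that are `L`-related (with explicit certificates) are equal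
in an amiable semigroup. -/
private lemma idem_eq_L (hS : IsAmiable S) {p q w w' : S} (hp : p * p = p) (hq : q * q = q)
    (h1 : w * p = q) (h2 : w' * q = p) : p = q := by
  obtain ⟨e0, -, hu⟩ := hS.1 p
  have hpe : p = e0 := hu p ⟨hp, lstar_refl p⟩
  have hqe : q = e0 := hu q ⟨hq, lstar_of_cert h1 h2⟩
  rw [hpe, hqe]

/-- Two idempotents that are `R`-related (with explicit certificates) are equal
in an amiable semigroup. -/
private lemma idem_eq_R (hS : IsAmiable S) {p q w w' : S} (hp : p * p = p) (hq : q * q = q)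
    (h1 : p * w = q) (h2 : q * w' = p) : p = q := by
  obtain ⟨e0, -, hu⟩ := hS.2 p
  have hpe : p = e0 := hu p ⟨hp, rstar_refl p⟩
  have hqe : q = e0 := hu q ⟨hq, rstar_of_cert h1 h2⟩
  rw [hpe, hqe]

/-- If `P` is idempotent and `P * w = P`, then `w * P = P` (in an amiable semigroup). -/
private lemma absorb_L (hS : IsAmiable S) {P w : S} (hP : P * P = P) (h : P * w = P) :
    w * P = P := by
  have key : P * (w * P) = P := by rw [← mul_assoc, h, hP]
  have hidem : (w * P) * (w * P) = w * P := by rw [mul_assoc, key]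
  exact (idem_eq_L hS hP hidem rfl key).symm

/-- If `P` is idempotent and `w * P = P`, then `P * w = P` (in an amiable semigroup). -/
private lemma absorb_R (hS : IsAmiable S) {P w : S} (hP : P * P = P) (h : w * P = P) :
    P * w = P := by
  have key : (P * w) * P = P := by rw [mul_assoc, h, hP]
  have hidem : (P * w) * (P * w) = P * w := by rw [← mul_assoc, key]
  exact (idem_eq_R hS hP hidem rfl key).symm

/-- If `u`, `v` and `u*v` are idempotents in an amiable semigroup avoiding `M`,
then `u*v = v*u`. -/
private lemma comm_of_idem_prod (hS : IsAmiable S) (hM : AvoidsM S)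
    (u v : S) (hu : u * u = u) (hv : v * v = v) (hc : (u * v) * (u * v) = u * v) :
    u * v = v * u := by
  have huc : u * (u * v) = u * v := by rw [← mul_assoc, hu]
  have hcv : (u * v) * v = u * v := by rw [mul_assoc, hv]
  -- c * u = c
  have hcu : (u * v) * u = u * v := by
    refine (idem_eq_R hS (w' := v) hc ?_ rfl ?_).symm
    · calc ((u * v) * u) * ((u * v) * u)
          = (u * v) * ((u * (u * v)) * u) := by simp only [mul_assoc]
        _ = ((u * v) * (u * v)) * u := by rw [huc]; simp only [mul_assoc]
        _ = (u * v) * u := by rw [hc]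
    · rw [mul_assoc]
      exact hc
  -- v * c = c
  have hvc : v * (u * v) = u * v := by
    refine (idem_eq_L hS (w' := u) hc ?_ rfl ?_).symm
    · have h1 : (u * v) * (v * (u * v)) = u * v := by rw [← mul_assoc, hcv, hc]
      calc (v * (u * v)) * (v * (u * v)) = v * ((u * v) * (v * (u * v))) := by
            rw [mul_assoc]
        _ = v * (u * v) := by rw [h1]
    · rw [← mul_assoc]
      exact hc
  have hud : u * (v * u) = u * v := by rw [← mul_assoc, hcu]
  by_cases h1 : u = v
  · rw [h1]
  by_cases h2 : u = u * v
  · have : v * u = u * v := by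
      conv_lhs => rw [h2]
      exact hvc
    exact this.symm
  by_cases h3 : u = v * u
  · have huc2 : u = u * v := by
      calc u = u * u := hu.symm
        _ = u * (v * u) := by rw [← h3]
        _ = u * v := hud
    rw [← huc2, ← h3]
  by_cases h4 : v = u * v
  · have : v * u = (u * v) * u := by rw [← h4]
    rw [this, hcu]
  by_cases h5 : v = v * u
  · have hvc2 : v = u * v := by
      calc v = v * v := hv.symm
        _ = (v * u) * v := by rw [← h5]
        _ = v * (u * v) := by rw [mul_assoc]
        _ = u * v := hvc
    rw [← hvc2, ← h5]
  by_cases h6 : u * v = v * u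
  · exact h6
  exfalso
  refine hM ⟨u, v, u * v, v * u, ⟨h1, h2, h3, h4, h5, h6⟩,
    hu, rfl, huc, hud, rfl, hv, hvc, ?_, hcu, hcv, hc, ?_, ?_, ?_, ?_, ?_⟩
  · rw [← mul_assoc, hv]
  · rw [← mul_assoc, hcv, hcu]
  · rw [mul_assoc, hu]
  · rw [mul_assoc, hvc]
  · calc (v * u) * (u * v) = v * (u * (u * v)) := by rw [mul_assoc]
      _ = v * (u * v) := by rw [huc]
      _ = u * v := hvc
  · calc (v * u) * (v * u) = v * (u * (v * u)) := by rw [mul_assoc]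
      _ = v * (u * v) := by rw [hud]
      _ = u * v := hvc

/-- The key descent step. -/
private lemma descent (hS : IsAmiable S) (hM : AvoidsM S) (a b x g : S)
    (ha : a * a = a)
    (hxb : x * b = x) (hxx : x * x = g)
    (hxab : x * (a * b) = g) (habx : (a * b) * x = g)
    (hgab : g * (a * b) = g) (habg : (a * b) * g = g)
    (hxg : x * g = g) (hgx : g * x = g)
    (hdec : x = a * b ∨ ∃ x' : S, (a * b) * x' = x ∧ x' * (a * b) = x) : x = g := by
  obtain ⟨e, ⟨hee, hle⟩, -⟩ := hS.1 x
  obtain ⟨q, ⟨hqq, hrq⟩, -⟩ := hS.2 (a * b)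
  obtain ⟨p, ⟨hpp, hlp⟩, -⟩ := hS.1 (a * b)
  have hgg : g * g = g := by
    have h' : (x * x) * g = g := by rw [mul_assoc, hxg, hxg]
    rw [hxx] at h'
    exact h'
  have hxe : x * e = x := (lstar_iff_one hle e).2 hee
  have hqab : q * (a * b) = a * b := (rstar_iff_one hrq q).2 hqq
  have habp : (a * b) * p = a * b := (lstar_iff_one hlp p).2 hpp
  have hqx : q * x = x := by
    rcases hdec with hh | ⟨x', hx1, hx2⟩
    · rw [hh]; exact hqab
    · rw [← hx1, ← mul_assoc, hqab]
  have hxp : x * p = x := by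
    rcases hdec with hh | ⟨x', hx1, hx2⟩
    · rw [hh]; exact habp
    · rw [← hx2, mul_assoc, habp]
  have hge : g * e = g := by rw [← habx, mul_assoc, hxe]
  have heg : e * g = g := absorb_L hS hgg hge
  have hex : e * x = g := by
    have h' := (lstar_iff hle x g).1 (hxx.trans hxg.symm)
    rw [heg] at h'
    exact h'
  have hqg : q * g = g := by rw [← habx, ← mul_assoc, hqab]
  have hgq : g * q = g := absorb_R hS hgg hqg
  have hxq : x * q = g := by
    have h' := (rstar_iff hrq x g).1 (hxab.trans hgab.symm)
    rw [hgq] at h'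
    exact h'
  have heq : e * q = g := by
    have h' := (lstar_iff hle q g).1 (hxq.trans hxg.symm)
    rw [heg] at h'
    exact h'
  have hqeqe : (q * e) * (q * e) = g := by
    rw [mul_assoc, ← mul_assoc e q e, heq, hge, hqg]
  by_cases h1 : e = q
  · calc x = x * e := hxe.symm
      _ = x * q := by rw [h1]
      _ = g := hxq
  by_cases h2 : e = g
  · calc x = x * e := hxe.symm
      _ = g := by rw [h2, hxg]
  by_cases h3 : e = q * e
  · calc x = x * e := hxe.symm
      _ = x * (q * e) := by rw [← h3]
      _ = (x * q) * e := by rw [mul_assoc]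
      _ = g * e := by rw [hxq]
      _ = g := hge
  by_cases h4 : q = g
  · calc x = q * x := hqx.symm
      _ = g := by rw [h4, hgx]
  by_cases h5 : q = q * e
  · calc x = q * x := hqx.symm
      _ = (q * e) * x := by rw [← h5]
      _ = q * (e * x) := by rw [mul_assoc]
      _ = q * g := by rw [hex]
      _ = g := hqg
  by_cases h6 : g = q * e
  · -- the delicate case, using `p`
    have haab : a * (a * b) = a * b := by rw [← mul_assoc, ha]
    have haq : a * q = q := (rstar_iff_one hrq a).1 haab
    have hqa : q * a = q := absorb_R hS hqq haq
    have hqb : q * b = a * b := by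
      conv_lhs => rw [← hqa]
      rw [mul_assoc, hqab]
    have heb : e * b = e := (lstar_iff_one hle b).1 hxb
    have hbe : b * e = e := absorb_L hS hee heb
    have habe : (a * b) * e = g := by
      rw [← hqb, mul_assoc, hbe, ← h6]
    have hpe_px : p * e = p * x := (lstar_iff hlp e x).1 (habe.trans habx.symm)
    have hpx_pg : p * x = p * g := (lstar_iff hlp x g).1 (habx.trans habg.symm)
    have hpxpx : (p * x) * (p * x) = p * x := by
      rw [mul_assoc, ← mul_assoc x p x, hxp, hxx]
      rw [hpx_pg]
    have hxpx : x * (p * x) = g := by rw [← mul_assoc, hxp, hxx]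
    have hpx_g : g = p * x := idem_eq_L hS hgg hpxpx hpx_pg.symm hxpx
    have hxpe : x * (p * e) = x := by rw [← mul_assoc, hxp, hxe]
    have hepe : e * (p * e) = e := (lstar_iff_one hle (p * e)).1 hxpe
    have hpepe : (p * e) * (p * e) = p * e := by rw [mul_assoc, hepe]
    have he_pe : e = p * e := idem_eq_L hS hee hpepe rfl hepe
    have heg2 : e = g := by rw [he_pe, hpe_px, ← hpx_g]
    calc x = x * e := hxe.symm
      _ = g := by rw [heg2, hxg]
  exfalso
  refine hM ⟨e, q, g, q * e, ⟨h1, h2, h3, h4, h5, h6⟩,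
    hee, heq, heg, ?_, rfl, hqq, hqg, ?_, hge, hgq, hgg, ?_, ?_, ?_, ?_, hqeqe⟩
  · rw [← mul_assoc, heq, hge]
  · rw [← mul_assoc, hqq]
  · rw [← mul_assoc, hgq, hge]
  · rw [mul_assoc, hee]
  · rw [mul_assoc, heq, hqg]
  · rw [mul_assoc, heg, hqg]

private lemma ABm_succ (a b : S) (n : ℕ) : ABm a b (n + 1) = (a * b) * ABm a b n := rfl

private lemma ABm_zero (a b : S) : ABm a b 0 = a * b := rfl

private lemma ABm_mul (a b : S) (m n : ℕ) :
    ABm a b m * ABm a b n = ABm a b (m + n + 1) := by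
  induction m with
  | zero =>
    show (a * b) * ABm a b n = ABm a b (0 + n + 1)
    rw [show 0 + n + 1 = n + 1 by omega, ABm_succ]
  | succ k ih =>
    rw [ABm_succ, mul_assoc, ih, show k + 1 + n + 1 = (k + n + 1) + 1 by omega]
    exact (ABm_succ a b (k + n + 1)).symm

private lemma ABm_stab (a b : S) (n : ℕ) (h : ABm a b (n + 1) = ABm a b n) (j : ℕ) :
    ABm a b (n + j) = ABm a b n := by
  induction j with
  | zero => rfl
  | succ k ih =>
    calc ABm a b (n + (k + 1)) = (a * b) * ABm a b (n + k) := rfl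
      _ = (a * b) * ABm a b n := by rw [ih]
      _ = ABm a b (n + 1) := rfl
      _ = ABm a b n := h

private lemma ABm_mul_b (a b : S) (hb : b * b = b) (n : ℕ) :
    ABm a b n * b = ABm a b n := by
  induction n with
  | zero => show (a * b) * b = a * b; rw [mul_assoc, hb]
  | succ k ih => rw [ABm_succ, mul_assoc, ih]

end AmiableHelpers

/-- In an amiable semigroup avoiding `M`, if `a, b` are idempotents with
`(ab)^(N+1) = (ab)^N` for some integer `N = n+1 ≥ 1`, then `ab = ba`.
(Here `ABm a b k = (ab)^(k+1)`.) -/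
theorem ab_comm_of_pow_stable {S : Type*} [Semigroup S] (hS : IsAmiable S) (hM : AvoidsM S)
    (a b : S) (ha : a * a = a) (hb : b * b = b) (n : ℕ)
    (h : ABm a b (n + 1) = ABm a b n) :
    a * b = b * a := by
  induction n with
  | zero =>
    exact comm_of_idem_prod hS hM a b ha hb h
  | succ k ih =>
    -- h : ABm a b (k+2) = ABm a b (k+1)
    have hstab := ABm_stab a b (k + 1) h
    have key : ABm a b k = ABm a b (k + 1) := by
      refine descent hS hM a b (ABm a b k) (ABm a b (k + 1)) ha ?_ ?_ ?_ ?_ ?_ ?_ ?_ ?_ ?_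
      · exact ABm_mul_b a b hb k
      · rw [ABm_mul, show k + k + 1 = (k + 1) + k by omega]
        exact hstab k
      · rw [← ABm_zero a b, ABm_mul, show k + 0 + 1 = k + 1 by omega]
      · rw [← ABm_zero a b, ABm_mul, show 0 + k + 1 = k + 1 by omega]
      · rw [← ABm_zero a b, ABm_mul, show (k + 1) + 0 + 1 = k + 2 by omega]
        exact h
      · rw [← ABm_zero a b, ABm_mul, show 0 + (k + 1) + 1 = k + 2 by omega]
        exact h
      · rw [ABm_mul, show k + (k + 1) + 1 = (k + 1) + (k + 1) by omega]
        exact hstab (k + 1)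
      · rw [ABm_mul, show (k + 1) + k + 1 = (k + 1) + (k + 1) by omega]
        exact hstab (k + 1)
      · cases k with
        | zero => exact Or.inl rfl
        | succ j =>
          refine Or.inr ⟨ABm a b j, rfl, ?_⟩
          rw [← ABm_zero a b, ABm_mul, show j + 0 + 1 = j + 1 by omega]
    exact ih key.symm
end

section
/- Let S be an amiable semigroup which avoids M and let a, b ∈ S be idempotents with ab ≠ ba. Then (ab)^m ≠ (ab)^n a for all integers m ≥ 1 and n ≥ 0 (where (ab)^0 a = a). -/
section Aux

variable {S : Type*} [Semigroup S]

/-- Transfer an equation along an `LStar` relation. -/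
theorem aux_lstar_transfer {x h : S} (hL : LStar x h)
    {p q : S} (hpq : x * p = x * q) : h * p = h * q := by
  have h1 : (x : WithOne S) * p = (x : WithOne S) * q := by
    rw [← WithOne.coe_mul, ← WithOne.coe_mul, hpq]
  have h2 := (hL p q).mp h1
  rwa [← WithOne.coe_mul, ← WithOne.coe_mul, WithOne.coe_inj] at h2

theorem aux_lstar_transfer_one {x h : S} (hL : LStar x h)
    {p : S} (hp : x * p = x) : h * p = h := by
  have h1 : (x : WithOne S) * p = (x : WithOne S) * 1 := by
    rw [mul_one, ← WithOne.coe_mul, hp]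
  have h2 := (hL p 1).mp h1
  rw [mul_one, ← WithOne.coe_mul, WithOne.coe_inj] at h2
  exact h2

theorem aux_lstar_self {x h : S} (hL : LStar x h) (hh : h * h = h) :
    x * h = x := by
  have h1 : (h : WithOne S) * h = (h : WithOne S) * 1 := by
    rw [mul_one, ← WithOne.coe_mul, hh]
  have h2 := (hL h 1).mpr h1
  rw [mul_one, ← WithOne.coe_mul, WithOne.coe_inj] at h2
  exact h2

/-- In an amiable semigroup, idempotents `E, F` with `EF = E` and `FE = F`
coincide (they are `𝓛*`-related, hence equal by uniqueness). -/
theorem aux_idem_unique (hS : IsAmiable S) {E F : S}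
    (hE : E * E = E) (hF : F * F = F) (hEF : E * F = E) (hFE : F * E = F) :
    E = F := by
  have hLEF : LStar E F := by
    intro u v
    constructor
    · intro huv
      have h1 : (F : WithOne S) * ((E : WithOne S) * u)
          = (F : WithOne S) * ((E : WithOne S) * v) := by rw [huv]
      rw [← mul_assoc, ← mul_assoc, ← WithOne.coe_mul, hFE] at h1
      exact h1
    · intro huv
      have h1 : (E : WithOne S) * ((F : WithOne S) * u)
          = (E : WithOne S) * ((F : WithOne S) * v) := by rw [huv]
      rw [← mul_assoc, ← mul_assoc, ← WithOne.coe_mul, hEF] at h1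
      exact h1
  exact (hS.1 E).unique ⟨hE, fun u v => Iff.rfl⟩ ⟨hF, hLEF⟩

theorem aux_ABm_succ (a b : S) (j : ℕ) : ABm a b (j+1) = (a*b) * ABm a b j := rfl

theorem aux_ABa_succ (a b : S) (j : ℕ) : ABa a b (j+1) = (a*b) * ABa a b j := rfl

theorem aux_ABm_eq (a b : S) : ∀ j, ABm a b j = ABa a b j * b
  | 0 => rfl
  | j+1 => by
      show (a*b) * ABm a b j = ((a*b) * ABa a b j) * b
      rw [aux_ABm_eq a b j, mul_assoc (a*b) (ABa a b j) b]

theorem aux_ABa_mul_a {a : S} (ha : a*a = a) (b : S) : ∀ j, ABa a b j * a = ABa a b j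
  | 0 => ha
  | j+1 => by rw [aux_ABa_succ, mul_assoc, aux_ABa_mul_a ha b j]

theorem aux_a_mul_ABa {a : S} (ha : a*a = a) (b : S) : ∀ j, a * ABa a b j = ABa a b j
  | 0 => ha
  | j+1 => by rw [aux_ABa_succ, ← mul_assoc, ← mul_assoc, ha]

theorem aux_ABm_mul_b (a : S) {b : S} (hb : b*b = b) : ∀ j, ABm a b j * b = ABm a b j
  | 0 => by show (a*b)*b = a*b; rw [mul_assoc, hb]
  | j+1 => by rw [aux_ABm_succ, mul_assoc, aux_ABm_mul_b a hb j]

theorem aux_a_mul_ABm {a : S} (ha : a*a = a) (b : S) : ∀ j, a * ABm a b j = ABm a b j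
  | 0 => by show a*(a*b) = a*b; rw [← mul_assoc, ha]
  | j+1 => by
      show a * ((a*b) * ABm a b j) = (a*b) * ABm a b j
      rw [← mul_assoc, ← mul_assoc, ha]

theorem aux_ABm_mul_ABm (a b : S) : ∀ i j, ABm a b i * ABm a b j = ABm a b (i+j+1)
  | 0, j => by
      show (a*b) * ABm a b j = ABm a b (0+j+1)
      rw [Nat.zero_add]
      exact rfl
  | i+1, j => by
      show ((a*b) * ABm a b i) * ABm a b j = ABm a b (i+1+j+1)
      rw [mul_assoc, aux_ABm_mul_ABm a b i j]
      have hidx : i+1+j+1 = (i+j+1)+1 := by omega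
      rw [hidx]
      exact rfl

end Aux

/-- If `a, b` are noncommuting idempotents of an amiable semigroup avoiding `M`,
then `(ab)^m ≠ (ab)^n a` for all `m ≥ 1`, `n ≥ 0`.
(Here `ABm a b m' = (ab)^(m'+1)` and `ABa a b n = (ab)^n a`.) -/
theorem pow_ab_ne_pow_ab_mul_a {S : Type*} [Semigroup S] (hS : IsAmiable S) (hM : AvoidsM S)
    (a b : S) (ha : a * a = a) (hb : b * b = b) (hne : a * b ≠ b * a) :
    ∀ m n : ℕ, ABm a b m ≠ ABa a b n := by
  classical
  intro m n heq
  cases n with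
  | zero =>
    -- then ab = a, and the pair (a, ba) violates uniqueness of idempotents in 𝓛*-classes
    have hma : ABm a b m = a := heq
    have hab : a * b = a := by
      calc a * b = ABm a b m * b := by rw [hma]
        _ = ABm a b m := aux_ABm_mul_b a hb m
        _ = a := hma
    have hba : a = b * a :=
      aux_idem_unique hS ha
        (show (b*a)*(b*a) = b*a by rw [mul_assoc, ← mul_assoc a b a, hab, ha])
        (show a*(b*a) = a by rw [← mul_assoc, hab, ha])
        (show (b*a)*a = b*a by rw [mul_assoc, ha])
    exact hne (hab.trans hba)
  | succ n =>
    -- e := (ab)^(n+1) a is an idempotent zero for the subsemigroup generated by a, b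
    set e := ABa a b (n+1) with he_def
    have heq' : ABm a b m = e := heq
    have he_a : e * a = e := aux_ABa_mul_a ha b (n+1)
    have ha_e : a * e = e := aux_a_mul_ABa ha b (n+1)
    have he_b : e * b = e := by rw [← heq']; exact aux_ABm_mul_b a hb m
    have he_x : e * (a*b) = e := by rw [← mul_assoc, he_a, he_b]
    have he_Q : ∀ j, e * ABa a b j = e := by
      intro j; induction j with
      | zero => exact he_a
      | succ j ih => rw [aux_ABa_succ, ← mul_assoc, he_x, ih]
    have he_e : e * e = e := he_Q (n+1)
    have hb_e : b * e = e := by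
      refine (aux_idem_unique hS he_e ?_ ?_ ?_).symm
      · show (b*e)*(b*e) = b*e
        rw [mul_assoc, ← mul_assoc e b e, he_b, he_e]
      · show e*(b*e) = e
        rw [← mul_assoc, he_b, he_e]
      · show (b*e)*e = b*e
        rw [mul_assoc, he_e]
    have hx_e : (a*b) * e = e := by rw [mul_assoc, hb_e, ha_e]
    have hR_e : ∀ j, ABm a b j * e = e := by
      intro j; induction j with
      | zero => exact hx_e
      | succ j ih => rw [aux_ABm_succ, mul_assoc, ih, hx_e]
    have hRn : ABm a b (n+1) = e := by
      rw [aux_ABm_eq a b (n+1), ← he_def, he_b]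
    have hex : ∃ K, ABm a b K = e := ⟨n+1, hRn⟩
    obtain ⟨K, hK, hKmin, hRge⟩ :
        ∃ K, ABm a b K = e ∧ (∀ j, j < K → ABm a b j ≠ e) ∧ ∀ j, ABm a b (K + j) = e := by
      refine ⟨Nat.find hex, Nat.find_spec hex, fun j hj => Nat.find_min hex hj, ?_⟩
      intro j; induction j with
      | zero => exact Nat.find_spec hex
      | succ j ih =>
        show (a*b) * ABm a b (Nat.find hex + j) = e
        rw [ih, hx_e]
    cases K with
    | zero =>
      -- ab = e : then {a, b, ab, ba} is a copy of M
      have hab : a*b = e := hK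
      have hane : a ≠ e := by
        intro h0; apply hne; rw [h0, he_b, hb_e]
      have hbne : b ≠ e := by
        intro h0; apply hne; rw [h0, ha_e, he_a]
      have p4 : a*(b*a) = e := by rw [← mul_assoc, hab, he_a]
      have p14 : (b*a)*b = e := by rw [mul_assoc, hab, hb_e]
      have d3 : a ≠ b*a := by
        intro h0
        have h4 := p4
        rw [← h0, ha] at h4
        exact hane h4
      have d5 : b ≠ b*a := by
        intro h0
        have h5 := p14
        rw [← h0, hb] at h5
        exact hbne h5
      exact hM ⟨a, b, e, b*a,
        ⟨fun h0 => hne (by rw [h0]), hane, d3, hbne, d5, fun h0 => hne (hab.trans h0)⟩,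
        ha, hab, ha_e, p4,
        rfl, hb, hb_e, (by rw [← mul_assoc, hb]),
        he_a, he_b, he_e, (by rw [← mul_assoc, he_b, he_a]),
        (by rw [mul_assoc, ha]), p14, (by rw [mul_assoc, ha_e, hb_e]),
        (by rw [mul_assoc, ← mul_assoc a b a, hab, he_a, hb_e])⟩
    | succ k =>
      have hw_ne : ABm a b k ≠ e := hKmin k (Nat.lt_succ_self k)
      have hxne : a*b ≠ e := hKmin 0 (Nat.succ_pos k)
      have hw_x : ABm a b k * (a*b) = e := by
        rw [show (a*b) = ABm a b 0 from rfl, aux_ABm_mul_ABm a b k 0]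
        exact hK
      have hw_b : ABm a b k * b = ABm a b k := aux_ABm_mul_b a hb k
      have hw_e : ABm a b k * e = e := hR_e k
      have ha_w : a * ABm a b k = ABm a b k := aux_a_mul_ABm ha b k
      have hxw : (a*b) * ABm a b k = e := hK
      have hww : ABm a b k * ABm a b k = e := by
        rw [aux_ABm_mul_ABm a b k k]
        have hidx : k + k + 1 = (k+1) + k := by omega
        rw [hidx]
        exact hRge k
      have hane : a ≠ e := fun h0 => hxne (show a*b = e by rw [h0, he_b])
      have hbne : b ≠ e := fun h0 => hxne (show a*b = e by rw [h0, ha_e])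
      set w' := ABm a b k * a with hw'def
      by_cases hwa : w' = e
      · -- the idempotent h of the 𝓛*-class of (ab)^(k+1) gives M = {h, a, e, a*h}
        obtain ⟨h, ⟨hh, hL⟩, -⟩ := hS.1 (ABm a b k)
        have hwh : ABm a b k * h = ABm a b k := aux_lstar_self hL hh
        have hhb : h * b = h := aux_lstar_transfer_one hL hw_b
        have hwae : ABm a b k * a = ABm a b k * e := by
          rw [← hw'def, hwa, hw_e]
        have hhae : h * a = h * e := aux_lstar_transfer hL hwae
        have heh : e * h = e := by rw [← hxw, mul_assoc, hwh]
        have hhe : h * e = e := by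
          refine (aux_idem_unique hS he_e ?_ ?_ ?_).symm
          · show (h*e)*(h*e) = h*e
            rw [mul_assoc, ← mul_assoc e h e, heh, he_e]
          · show e*(h*e) = e
            rw [← mul_assoc, heh, he_e]
          · show (h*e)*e = h*e
            rw [mul_assoc, he_e]
        have hha : h * a = e := hhae.trans hhe
        have hbh : b * h = h := by
          refine (aux_idem_unique hS hh ?_ ?_ ?_).symm
          · show (b*h)*(b*h) = b*h
            rw [mul_assoc, ← mul_assoc h b h, hhb, hh]
          · show h*(b*h) = h
            rw [← mul_assoc, hhb, hh]
          · show (b*h)*h = b*h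
            rw [mul_assoc, hh]
        have hxh : (a*b)*h = a*h := by rw [mul_assoc, hbh]
        have hhne : h ≠ e := by
          intro h0
          apply hw_ne
          rw [← hwh, h0, hw_e]
        have hhna : h ≠ a := by
          intro h0
          have h1 := hha
          rw [h0, ha] at h1
          exact hane h1
        have hDne : a*h ≠ e := by
          intro h0
          have hRh : ∀ j, ABm a b j * h = e := by
            intro j; induction j with
            | zero => show (a*b)*h = e; rw [hxh, h0]
            | succ j ih =>
              show ((a*b) * ABm a b j)*h = e
              rw [mul_assoc, ih, hx_e]
          exact hw_ne (by rw [← hwh, hRh k])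
        have hDna : a*h ≠ a := by
          intro h0
          have h1 : (a*h)*a = a*(h*a) := mul_assoc a h a
          rw [h0, hha, ha, ha_e] at h1
          exact hane h1
        have hDnh : a*h ≠ h := by
          intro h0
          have h1 : h*(a*h) = (h*a)*h := (mul_assoc h a h).symm
          rw [h0, hh, hha, heh] at h1
          exact hhne h1
        exact hM ⟨h, a, e, a*h,
          ⟨hhna, hhne, Ne.symm hDnh, hane, Ne.symm hDna, Ne.symm hDne⟩,
          hh, hha, hhe, (by rw [← mul_assoc, hha, heh]),
          rfl, ha, ha_e, (by rw [← mul_assoc, ha]),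
          heh, he_a, he_e, (by rw [← mul_assoc, he_a, heh]),
          (by rw [mul_assoc, hh]), (by rw [mul_assoc, hha, ha_e]),
          (by rw [mul_assoc, hhe, ha_e]),
          (by rw [mul_assoc, ← mul_assoc h a h, hha, heh, ha_e])⟩
      · -- w' = (ab)^(k+1) a ≠ e; the idempotent h of its 𝓛*-class gives M = {h, b, e, b*h}
        have hw'a : w' * a = w' := by rw [hw'def, mul_assoc, ha]
        have hw'b : w' * b = e := by rw [hw'def, mul_assoc]; exact hw_x
        have hw'w' : w' * w' = e := by
          rw [hw'def, mul_assoc, ← mul_assoc a (ABm a b k) a, ha_w, ← mul_assoc, hww, he_a]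
        have hw'e : w' * e = e := by
          rw [hw'def, mul_assoc, ha_e]
          exact hR_e k
        obtain ⟨h, ⟨hh, hL⟩, -⟩ := hS.1 w'
        have hw'h : w' * h = w' := aux_lstar_self hL hh
        have hha2 : h * a = h := aux_lstar_transfer_one hL hw'a
        have hhbe : h * b = h * e := aux_lstar_transfer hL (hw'b.trans hw'e.symm)
        have heh : e * h = e := by rw [← hw'w', mul_assoc, hw'h]
        have hhe : h * e = e := by
          refine (aux_idem_unique hS he_e ?_ ?_ ?_).symm
          · show (h*e)*(h*e) = h*e
            rw [mul_assoc, ← mul_assoc e h e, heh, he_e]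
          · show e*(h*e) = e
            rw [← mul_assoc, heh, he_e]
          · show (h*e)*e = h*e
            rw [mul_assoc, he_e]
        have hhb : h * b = e := hhbe.trans hhe
        have hah : a * h = h := by
          refine (aux_idem_unique hS hh ?_ ?_ ?_).symm
          · show (a*h)*(a*h) = a*h
            rw [mul_assoc, ← mul_assoc h a h, hha2, hh]
          · show h*(a*h) = h
            rw [← mul_assoc, hha2, hh]
          · show (a*h)*h = a*h
            rw [mul_assoc, hh]
        have hhne : h ≠ e := by
          intro h0
          apply hwa
          rw [← hw'h, h0]
          exact hw'e
        have hhnb : h ≠ b := by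
          intro h0
          have h1 := hhb
          rw [h0, hb] at h1
          exact hbne h1
        have hDne : b*h ≠ e := by
          intro h0
          have hxh : (a*b)*h = e := by rw [mul_assoc, h0, ha_e]
          have hRh : ∀ j, ABm a b j * h = e := by
            intro j; induction j with
            | zero => exact hxh
            | succ j ih =>
              show ((a*b) * ABm a b j)*h = e
              rw [mul_assoc, ih, hx_e]
          apply hwa
          rw [← hw'h, hw'def, mul_assoc, hah]
          exact hRh k
        have hDnb : b*h ≠ b := by
          intro h0
          have h1 : b*(h*b) = (b*h)*b := (mul_assoc b h b).symm
          rw [hhb, hb_e, h0, hb] at h1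
          exact hbne h1.symm
        have hDnh : b*h ≠ h := by
          intro h0
          have h1 : h*(b*h) = (h*b)*h := (mul_assoc h b h).symm
          rw [h0, hh, hhb, heh] at h1
          exact hhne h1
        exact hM ⟨h, b, e, b*h,
          ⟨hhnb, hhne, Ne.symm hDnh, hbne, Ne.symm hDnb, Ne.symm hDne⟩,
          hh, hhb, hhe, (by rw [← mul_assoc, hhb, heh]),
          rfl, hb, hb_e, (by rw [← mul_assoc, hb]),
          heh, he_b, he_e, (by rw [← mul_assoc, he_b, heh]),
          (by rw [mul_assoc, hh]), (by rw [mul_assoc, hhb, hb_e]),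
          (by rw [mul_assoc, hhe, hb_e]),
          (by rw [mul_assoc, ← mul_assoc h b h, hhb, heh, hb_e])⟩
end
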